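/- arXiv:1302.6191 — 12 statements merged into one kernel-verified Lean document; each statement's English description precedes it below -/
import Mathlib

section
/- Let f : {-1,1}^n → {-1,1} be a Boolean function, let ε ≥ 0 be a real number, and let d be a natural number. Then deg_ε(f) > d if and only if there exists a function φ : {-1,1}^n → ℝ such that (1) Σ_{x ∈ {-1,1}^n} f(x)·φ(x) > ε, (2) Σ_{x ∈ {-1,1}^n} |φ(x)| = 1, and (3) φ has pure high degree d. -/
/-- The Boolean hypercube `{-1,1}^n` as a finite set of points in `ℝ^n`. -/
noncomputable def cube (n : ℕ) : Finset (Fin n → ℝ) :=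
  Fintype.piFinset fun _ => ({1, -1} : Finset ℝ)

/-- The `ε`-approximate degree of `f : {-1,1}^n → ℝ`: the least `d` such that some real
polynomial of total degree at most `d` approximates `f` pointwise within `ε` on the cube. -/
noncomputable def approxDeg {n : ℕ} (f : (Fin n → ℝ) → ℝ) (ε : ℝ) : ℕ :=
  sInf {d : ℕ | ∃ p : MvPolynomial (Fin n) ℝ, p.totalDegree ≤ d ∧
    ∀ x ∈ cube n, |MvPolynomial.eval x p - f x| ≤ ε}

/-!
Weak duality: on the cube every monomial restricts to a character of no larger degree, so a
function `φ` of pure high degree `d` is orthogonal to every polynomial `p` of degree `≤ d`, and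
`∑ f φ = ∑ (f - p) φ ≤ ‖f - p‖_∞ · ‖φ‖₁`.

Strong duality: if no polynomial of degree `≤ d` is `ε`-close to `f`, the sup-norm distance from
`f` to the finite-dimensional space `V` of low-degree functions on the cube exceeds `ε`.
Hahn–Banach on `(cube → ℝ) ⧸ V` gives a functional of norm `≤ 1` vanishing on `V` and equal to
that distance at `f`; a functional of norm `≤ 1` for the sup norm is pairing with a vector of
`ℓ¹`-norm `≤ 1`, and normalising that vector gives `φ`.
-/

open Finset Metric MvPolynomial

section SupNormDuality

variable {ι : Type*} [Fintype ι]

lemma sum_abs_le_one_of_forall_sum_mul_le_norm (ψ : ι → ℝ)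
    (h : ∀ u : ι → ℝ, ∑ i, u i * ψ i ≤ ‖u‖) : ∑ i, |ψ i| ≤ 1 := by
  have hsign : ‖fun i => (SignType.sign (ψ i) : ℝ)‖ ≤ 1 :=
    (pi_norm_le_iff_of_nonneg zero_le_one).2 fun i => by
      rcases SignType.sign (ψ i) with _ | _ | _ <;> simp
  calc ∑ i, |ψ i| = ∑ i, (SignType.sign (ψ i) : ℝ) * ψ i := by simp only [sign_mul_self]
    _ ≤ 1 := (h _).trans hsign

lemma exists_sum_abs_le_one_sum_mul_eq_infDist (V : Submodule ℝ (ι → ℝ)) (f : ι → ℝ) :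
    ∃ ψ : ι → ℝ, ∑ i, |ψ i| ≤ 1 ∧ ∑ i, f i * ψ i = infDist f V ∧
      ∀ v ∈ V, ∑ i, v i * ψ i = 0 := by
  classical
  obtain ⟨g, hg_norm, hg_f⟩ := exists_dual_vector'' ℝ (Submodule.Quotient.mk f : (ι → ℝ) ⧸ V)
  set L : (ι → ℝ) →ₗ[ℝ] ℝ := g.toLinearMap ∘ₗ V.mkQ
  have hL : ∀ u, ∑ i, u i * L (Pi.single i 1) = L u := fun u => by
    rw [L.pi_apply_eq_sum_univ u]
    congr! 3 with i
    ext j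
    simp [Pi.single_apply, eq_comm]
  refine ⟨fun i => L (Pi.single i 1), ?_, ?_, fun v hv => ?_⟩
  · refine sum_abs_le_one_of_forall_sum_mul_le_norm _ fun u => ?_
    calc ∑ i, u i * L (Pi.single i 1) = g (V.mkQ u) := hL u
      _ ≤ ‖g‖ * ‖V.mkQ u‖ := (le_abs_self _).trans (g.le_opNorm _)
      _ ≤ 1 * ‖u‖ := by gcongr; exact Submodule.Quotient.norm_mk_le _ _
      _ = ‖u‖ := one_mul _
  · rw [hL]
    exact hg_f.trans (QuotientAddGroup.norm_mk f)
  · rw [hL]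
    simp [L, (Submodule.Quotient.mk_eq_zero V).2 hv]

lemma exists_sum_abs_eq_one_infDist_le_sum_mul (V : Submodule ℝ (ι → ℝ)) (f : ι → ℝ)
    (hf : 0 < infDist f V) :
    ∃ ψ : ι → ℝ, ∑ i, |ψ i| = 1 ∧ infDist f V ≤ ∑ i, f i * ψ i ∧
      ∀ v ∈ V, ∑ i, v i * ψ i = 0 := by
  obtain ⟨ψ, hψ_abs, hψ_f, hψ_V⟩ := exists_sum_abs_le_one_sum_mul_eq_infDist V f
  set s := ∑ i, |ψ i|
  have hs : 0 < s := by
    refine (sum_nonneg fun i _ => abs_nonneg _).lt_of_ne fun hs => hf.ne' ?_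
    have hψ : ψ = 0 := funext fun i =>
      abs_eq_zero.1 ((sum_eq_zero_iff_of_nonneg fun i _ => abs_nonneg _).1 hs.symm i (mem_univ i))
    simp [← hψ_f, hψ]
  refine ⟨fun i => ψ i / s, ?_, ?_, fun v hv => ?_⟩
  · simp_rw [abs_div, abs_of_pos hs, ← sum_div]
    exact div_self hs.ne'
  · simp_rw [mul_div_assoc', ← sum_div, hψ_f]
    exact le_div_self hf.le hs hψ_abs
  · simp_rw [mul_div_assoc', ← sum_div, hψ_V v hv, zero_div]

end SupNormDuality

lemma lt_infDist_of_forall_lt_dist {E : Type*} [NormedAddCommGroup E] [NormedSpace ℝ E]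
    [FiniteDimensional ℝ E] (V : Submodule ℝ E) {f : E} {ε : ℝ}
    (h : ∀ v ∈ V, ε < dist f v) : ε < infDist f V := by
  obtain ⟨v, hv, hdist⟩ :=
    V.closed_of_finiteDimensional.exists_infDist_eq_dist ⟨0, V.zero_mem⟩ f
  exact hdist ▸ h v hv

lemma Finset.sum_extend_val {α β M : Type*} [Zero β] [AddCommMonoid M] {s : Finset α}
    (ψ : s → β) (g : α → β → M) :
    ∑ x ∈ s, g x (Function.extend Subtype.val ψ 0 x) = ∑ x : s, g x (ψ x) := by
  rw [← sum_coe_sort]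
  simp

lemma pow_eq_ite_odd {M : Type*} [Monoid M] {x : M} (hx : x ^ 2 = 1) (k : ℕ) :
    x ^ k = if Odd k then x else 1 := by
  rcases Nat.even_or_odd' k with ⟨m, rfl | rfl⟩
  · simp [pow_mul, hx]
  · simp [pow_succ, pow_mul, hx]

lemma card_filter_odd_le_sum {σ : Type*} (α : σ →₀ ℕ) :
    #{i ∈ α.support | Odd (α i)} ≤ α.sum fun _ e => e := by
  calc #{i ∈ α.support | Odd (α i)} ≤ ∑ i ∈ α.support with Odd (α i), α i := by
        rw [card_eq_sum_ones]
        exact sum_le_sum fun i hi => (mem_filter.1 hi).2.pos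
    _ ≤ α.sum fun _ e => e := sum_le_sum_of_subset (filter_subset _ _)

lemma eq_one_or_eq_neg_one_of_mem_cube {n : ℕ} {x : Fin n → ℝ} (hx : x ∈ cube n) (i : Fin n) :
    x i = 1 ∨ x i = -1 := by
  simpa using Fintype.mem_piFinset.1 hx i

lemma sq_eq_one_of_mem_cube {n : ℕ} {x : Fin n → ℝ} (hx : x ∈ cube n) (i : Fin n) :
    x i ^ 2 = 1 := by
  rcases eq_one_or_eq_neg_one_of_mem_cube hx i with h | h <;> simp [h]

lemma prod_pow_eq_prod_filter_odd {n : ℕ} {x : Fin n → ℝ} (hx : x ∈ cube n) (α : Fin n →₀ ℕ) :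
    ∏ i ∈ α.support, x i ^ α i = ∏ i ∈ α.support with Odd (α i), x i := by
  rw [prod_filter]
  exact prod_congr rfl fun i _ => pow_eq_ite_odd (sq_eq_one_of_mem_cube hx i) (α i)

lemma sum_mul_eval_eq_zero_of_totalDegree_le {n d : ℕ} {φ : (Fin n → ℝ) → ℝ}
    (hφ : ∀ S : Finset (Fin n), #S ≤ d → ∑ x ∈ cube n, φ x * ∏ i ∈ S, x i = 0)
    {p : MvPolynomial (Fin n) ℝ} (hp : p.totalDegree ≤ d) :
    ∑ x ∈ cube n, φ x * eval x p = 0 := by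
  calc ∑ x ∈ cube n, φ x * eval x p
      = ∑ x ∈ cube n, ∑ α ∈ p.support,
          coeff α p * (φ x * ∏ i ∈ α.support with Odd (α i), x i) :=
        sum_congr rfl fun x hx => by
          rw [eval_eq, mul_sum]
          refine sum_congr rfl fun α _ => ?_
          rw [prod_pow_eq_prod_filter_odd hx]
          ring
    _ = ∑ α ∈ p.support, coeff α p * ∑ x ∈ cube n, φ x * ∏ i ∈ α.support with Odd (α i), x i := by
        rw [sum_comm]
        simp_rw [mul_sum]
    _ = 0 := sum_eq_zero fun α hα => by
        rw [hφ _ ((card_filter_odd_le_sum α).trans ((le_totalDegree hα).trans hp)), mul_zero]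

lemma sum_mul_le_of_forall_abs_eval_sub_le {n d : ℕ} {f φ : (Fin n → ℝ) → ℝ} {ε : ℝ}
    (hφ_abs : ∑ x ∈ cube n, |φ x| = 1)
    (hφ : ∀ S : Finset (Fin n), #S ≤ d → ∑ x ∈ cube n, φ x * ∏ i ∈ S, x i = 0)
    {p : MvPolynomial (Fin n) ℝ} (hp : p.totalDegree ≤ d)
    (happrox : ∀ x ∈ cube n, |eval x p - f x| ≤ ε) :
    ∑ x ∈ cube n, f x * φ x ≤ ε := by
  calc ∑ x ∈ cube n, f x * φ x = ∑ x ∈ cube n, (f x - eval x p) * φ x := by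
        simp_rw [sub_mul, sum_sub_distrib, mul_comm (eval _ p),
          sum_mul_eval_eq_zero_of_totalDegree_le hφ hp, sub_zero]
    _ ≤ ∑ x ∈ cube n, ε * |φ x| := sum_le_sum fun x hx => by
        refine (le_abs_self _).trans ?_
        rw [abs_mul, abs_sub_comm]
        exact mul_le_mul_of_nonneg_right (happrox x hx) (abs_nonneg _)
    _ = ε := by rw [← mul_sum, hφ_abs, mul_one]

lemma prod_mul_add_one_eq_ite {n : ℕ} {x y : Fin n → ℝ} (hx : x ∈ cube n) (hy : y ∈ cube n) :
    ∏ i, (y i * x i + 1) = if y = x then 2 ^ n else 0 := by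
  split_ifs with hyx
  · subst hyx
    simp [← sq, sq_eq_one_of_mem_cube hy, one_add_one_eq_two]
  · obtain ⟨i, hi⟩ := Function.ne_iff.1 hyx
    refine prod_eq_zero (mem_univ i) ?_
    rcases eq_one_or_eq_neg_one_of_mem_cube hx i with h | h <;>
      rcases eq_one_or_eq_neg_one_of_mem_cube hy i with h' | h' <;> simp_all

lemma exists_eval_eq_on_cube {n : ℕ} (f : (Fin n → ℝ) → ℝ) :
    ∃ p : MvPolynomial (Fin n) ℝ, ∀ x ∈ cube n, eval x p = f x := by
  refine ⟨∑ y ∈ cube n, C (f y / 2 ^ n) * ∏ i, (C (y i) * X i + 1), fun x hx => ?_⟩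
  simp only [map_sum, map_mul, map_prod, map_add, eval_C, eval_X, map_one]
  rw [sum_congr rfl fun y hy => by rw [prod_mul_add_one_eq_ite hx hy]]
  simp [hx]

lemma approxDeg_le_iff {n : ℕ} {f : (Fin n → ℝ) → ℝ} {ε : ℝ} (hε : 0 ≤ ε) {d : ℕ} :
    approxDeg f ε ≤ d ↔
      ∃ p : MvPolynomial (Fin n) ℝ, p.totalDegree ≤ d ∧ ∀ x ∈ cube n, |eval x p - f x| ≤ ε := by
  refine ⟨fun h => ?_, fun h => Nat.sInf_le h⟩
  -- interpolation makes the defining set nonempty, so its `sInf` is attained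
  obtain ⟨p₀, hp₀⟩ := exists_eval_eq_on_cube f
  obtain ⟨p, hp, happrox⟩ := Nat.sInf_mem (s := {d : ℕ | ∃ p : MvPolynomial (Fin n) ℝ,
    p.totalDegree ≤ d ∧ ∀ x ∈ cube n, |eval x p - f x| ≤ ε})
    ⟨_, p₀, le_rfl, fun x hx => by simp [hp₀ x hx, hε]⟩
  exact ⟨p, hp.trans h, happrox⟩

noncomputable def evalOnCube (n : ℕ) : MvPolynomial (Fin n) ℝ →ₗ[ℝ] (cube n → ℝ) :=
  LinearMap.pi fun x => (aeval (x : Fin n → ℝ)).toLinearMap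

lemma evalOnCube_apply {n : ℕ} (p : MvPolynomial (Fin n) ℝ) (x : cube n) :
    evalOnCube n p x = eval (x : Fin n → ℝ) p := by
  simp [evalOnCube]

lemma totalDegree_prod_X_le {σ R : Type*} [CommSemiring R] [Nontrivial R] (S : Finset σ) :
    (∏ i ∈ S, X i : MvPolynomial σ R).totalDegree ≤ #S :=
  (totalDegree_finsetProd S _).trans (by simp [totalDegree_X])

lemma exists_dual_witness_of_forall_not_approx {n d : ℕ} (f : (Fin n → ℝ) → ℝ) {ε : ℝ}
    (hε : 0 ≤ ε)
    (h : ∀ p : MvPolynomial (Fin n) ℝ, p.totalDegree ≤ d →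
      ¬ ∀ x ∈ cube n, |eval x p - f x| ≤ ε) :
    ∃ φ : (Fin n → ℝ) → ℝ, ε < ∑ x ∈ cube n, f x * φ x ∧ ∑ x ∈ cube n, |φ x| = 1 ∧
      ∀ S : Finset (Fin n), #S ≤ d → ∑ x ∈ cube n, φ x * ∏ i ∈ S, x i = 0 := by
  set V := (restrictTotalDegree (Fin n) ℝ d).map (evalOnCube n)
  set g : cube n → ℝ := fun x => f x
  have hdist : ε < infDist g V := lt_infDist_of_forall_lt_dist V fun v hv => by
    obtain ⟨p, hp, rfl⟩ := Submodule.mem_map.1 hv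
    refine lt_of_not_ge fun hle => h p ((mem_restrictTotalDegree _ _ _).1 hp) fun x hx => ?_
    rw [← evalOnCube_apply p ⟨x, hx⟩, ← Real.dist_eq, dist_comm]
    exact (dist_le_pi_dist g _ ⟨x, hx⟩).trans hle
  obtain ⟨ψ, hψ_abs, hψ_f, hψ_V⟩ :=
    exists_sum_abs_eq_one_infDist_le_sum_mul V g (hε.trans_lt hdist)
  refine ⟨Function.extend Subtype.val ψ 0, ?_, ?_, fun S hS => ?_⟩
  · rw [sum_extend_val ψ fun x t => f x * t]
    exact hdist.trans_le hψ_f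
  · rw [sum_extend_val ψ fun _ t => |t|]
    exact hψ_abs
  · rw [sum_extend_val ψ fun x t => t * ∏ i ∈ S, x i]
    simp_rw [mul_comm (ψ _)]
    refine hψ_V _ (Submodule.mem_map.2 ⟨∏ i ∈ S, X i, ?_, funext fun x => ?_⟩)
    · exact (mem_restrictTotalDegree _ _ _).2 ((totalDegree_prod_X_le S).trans hS)
    · simp [evalOnCube_apply]

theorem stmt0_general {n : ℕ} (f : (Fin n → ℝ) → ℝ)
    (ε : ℝ) (hε : 0 ≤ ε) (d : ℕ) :
    approxDeg f ε > d ↔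
      ∃ φ : (Fin n → ℝ) → ℝ,
        (∑ x ∈ cube n, f x * φ x) > ε ∧
        (∑ x ∈ cube n, |φ x|) = 1 ∧
        (∀ S : Finset (Fin n), S.card ≤ d →
          (∑ x ∈ cube n, φ x * ∏ i ∈ S, x i) = 0) := by
  rw [gt_iff_lt, ← not_le, approxDeg_le_iff hε, not_exists]
  refine ⟨fun h => exists_dual_witness_of_forall_not_approx f hε fun p hp => not_and.1 (h p) hp, ?_⟩
  rintro ⟨φ, hφ_f, hφ_abs, hφ⟩ p ⟨hp, happrox⟩
  exact (sum_mul_le_of_forall_abs_eval_sub_le hφ_abs hφ hp happrox).not_gt hφ_f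

theorem stmt0 {n : ℕ} (f : (Fin n → ℝ) → ℝ)
    (hf : ∀ x ∈ cube n, f x = 1 ∨ f x = -1)
    (ε : ℝ) (hε : 0 ≤ ε) (d : ℕ) :
    approxDeg f ε > d ↔
      ∃ φ : (Fin n → ℝ) → ℝ,
        (∑ x ∈ cube n, f x * φ x) > ε ∧
        (∑ x ∈ cube n, |φ x|) = 1 ∧
        (∀ S : Finset (Fin n), S.card ≤ d →
          (∑ x ∈ cube n, φ x * ∏ i ∈ S, x i) = 0) :=
  stmt0_general f ε hε d
end

section
/- Let m ≥ 1 and let k be an integer with 0 ≤ k ≤ m. Then ∏_{j=0, j≠k}^{m} |k² − j²| ≥ ∏_{j=0, j≠1}^{m} |1 − j²|. In other words, over k ∈ {0,1,…,m}, the product ∏_{j∈{0,…,m}, j≠k} |k² − j²| is minimized at k = 1. -/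
open Finset Nat

private lemma asc_prod (n : ℕ) : ∀ t : ℕ, (∏ j ∈ range t, (n + j)) = n.ascFactorial t
  | 0 => by simp
  | t + 1 => by
      rw [prod_range_succ, asc_prod n t, Nat.ascFactorial_succ, mul_comm]

private lemma base_prod (s : ℕ) :
    2 * ∏ j ∈ range (s + 1), ((s + 1 + j) * (s + 1 - j)) = (2 * (s + 1))! := by
  rw [prod_mul_distrib]
  have h1 : (∏ j ∈ range (s + 1), (s + 1 - j)) = (s + 1)! := by
    rw [← prod_range_reflect (fun j => s + 1 - j) (s + 1)]
    rw [← prod_range_add_one_eq_factorial (s + 1)]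
    apply prod_congr rfl
    intro i hi
    simp only [mem_range] at hi
    omega
  have h2 : (∏ j ∈ range (s + 1), (s + 1 + j)) = (s + 1).ascFactorial (s + 1) :=
    asc_prod _ _
  have h3 : s ! * (s + 1).ascFactorial (s + 1) = (s + (s + 1))! :=
    Nat.factorial_mul_ascFactorial s (s + 1)
  rw [h1, h2]
  have : (s + 1)! = (s + 1) * s ! := Nat.factorial_succ s
  have h4 : 2 * (s + 1) = (s + (s + 1)) + 1 := by omega
  rw [h4, this, Nat.factorial_succ (s + (s + 1)), ← h3]
  ring

private lemma fact_aux (a : ℕ) : ∀ c : ℕ, (a + c)! * (a + c + 2)! ≤ a ! * (a + 2 * c + 2)!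
  | 0 => by simp
  | c + 1 => by
      have ih := fact_aux a c
      have f1 : (a + c + 1)! = (a + c + 1) * (a + c)! := Nat.factorial_succ _
      have f2 : (a + c + 1 + 2)! = (a + c + 2 + 1) * (a + c + 2)! := by
        rw [show a + c + 1 + 2 = (a + c + 2) + 1 by omega, Nat.factorial_succ]
      have f3 : (a + 2 * (c + 1) + 2)! =
          (a + 2 * c + 2 + 1 + 1) * ((a + 2 * c + 2 + 1) * (a + 2 * c + 2)!) := by
        rw [show a + 2 * (c + 1) + 2 = ((a + 2 * c + 2) + 1) + 1 by omega,
          Nat.factorial_succ, Nat.factorial_succ]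
      rw [show a + (c + 1) = a + c + 1 by omega, f1, f2, f3]
      calc ((a + c + 1) * (a + c)!) * ((a + c + 2 + 1) * (a + c + 2)!)
          = ((a + c + 1) * (a + c + 3)) * ((a + c)! * (a + c + 2)!) := by ring
        _ ≤ ((a + 2 * c + 2 + 1 + 1) * (a + 2 * c + 2 + 1)) * (a ! * (a + 2 * c + 2)!) := by
            apply Nat.mul_le_mul _ ih
            nlinarith
        _ = a ! * ((a + 2 * c + 2 + 1 + 1) * ((a + 2 * c + 2 + 1) * (a + 2 * c + 2)!)) := by ring

private lemma prod_eq (m k : ℕ) (h1 : 1 ≤ k) (hk : k ≤ m) :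
    2 * ∏ j ∈ (Finset.range (m + 1)).erase k, |(k : ℤ) ^ 2 - (j : ℤ) ^ 2| =
      ((m - k)! : ℤ) * ((m + k)! : ℤ) := by
  induction m, hk using Nat.le_induction with
  | base =>
      have hset : (Finset.range (k + 1)).erase k = Finset.range k := by
        ext x; simp [Finset.mem_erase, Finset.mem_range]; omega
      rw [hset]
      have hcast : (∏ j ∈ range k, |(k : ℤ) ^ 2 - (j : ℤ) ^ 2|) =
          ((∏ j ∈ range k, ((k + j) * (k - j)) : ℕ) : ℤ) := by
        push_cast
        apply prod_congr rfl
        intro j hj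
        simp only [mem_range] at hj
        have hjk : (j : ℤ) ≤ (k : ℤ) := by exact_mod_cast hj.le
        have : ((k - j : ℕ) : ℤ) = (k : ℤ) - (j : ℤ) := by
          exact_mod_cast Int.ofNat_sub hj.le
        rw [this, abs_of_nonneg (by nlinarith : (0:ℤ) ≤ (k:ℤ)^2 - (j:ℤ)^2)]
        ring
      rw [hcast]
      obtain ⟨s, rfl⟩ : ∃ s, k = s + 1 := ⟨k - 1, by omega⟩
      have hb := base_prod s
      have : s + 1 - (s + 1) = 0 := by omega
      rw [this]
      have h2 : s + 1 + (s + 1) = 2 * (s + 1) := by ring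
      rw [h2]
      rw [Nat.factorial_zero, ← hb]
      push_cast
      ring
  | succ n hn ih =>
      have hset : (Finset.range (n + 1 + 1)).erase k =
          insert (n + 1) ((Finset.range (n + 1)).erase k) := by
        ext x
        simp only [Finset.mem_erase, Finset.mem_range, Finset.mem_insert]
        omega
      rw [hset, Finset.prod_insert (by simp [Finset.mem_erase, Finset.mem_range])]
      have habs : |(k : ℤ) ^ 2 - ((n + 1 : ℕ) : ℤ) ^ 2| =
          ((n + 1 : ℕ) : ℤ) ^ 2 - (k : ℤ) ^ 2 := by
        rw [abs_sub_comm]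
        apply abs_of_nonneg
        have : (k : ℤ) ≤ ((n + 1 : ℕ) : ℤ) := by exact_mod_cast (by omega : k ≤ n + 1)
        have hk0 : (0:ℤ) ≤ (k:ℤ) := by positivity
        nlinarith
      rw [habs]
      have e1 : n + 1 - k = (n - k) + 1 := by omega
      have e2 : n + 1 + k = (n + k) + 1 := by omega
      rw [e1, e2, Nat.factorial_succ, Nat.factorial_succ]
      have hnk : ((n - k : ℕ) : ℤ) = (n : ℤ) - (k : ℤ) := by
        exact_mod_cast Int.ofNat_sub hn
      push_cast [hnk]
      push_cast [hnk] at ih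
      nlinarith [ih]

private lemma prod_zero (m : ℕ) :
    (∏ j ∈ (Finset.range (m + 1)).erase 0, |(0 : ℤ) ^ 2 - (j : ℤ) ^ 2|) =
      ((m ! : ℕ) : ℤ) ^ 2 := by
  have hset : (Finset.range (m + 1)).erase 0 = Finset.Ico 1 (m + 1) := by
    ext x; simp [Finset.mem_erase, Finset.mem_range, Finset.mem_Ico]; omega
  rw [hset]
  have : (∏ j ∈ Finset.Ico 1 (m + 1), |(0 : ℤ) ^ 2 - (j : ℤ) ^ 2|) =
      ((∏ j ∈ Finset.Ico 1 (m + 1), j : ℕ) : ℤ) ^ 2 := by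
    push_cast
    rw [← prod_pow]
    apply prod_congr rfl
    intro j _
    rw [show (0 : ℤ) - (j : ℤ) ^ 2 = -((j : ℤ) ^ 2) by ring, abs_neg,
      abs_of_nonneg (sq_nonneg _)]
  rw [this, Finset.prod_Ico_id_eq_factorial]

theorem stmt8 (m k : ℕ) (hm : 1 ≤ m) (hk : k ≤ m) :
    (∏ j ∈ (Finset.range (m + 1)).erase 1, |1 - (j : ℤ) ^ 2|) ≤
      ∏ j ∈ (Finset.range (m + 1)).erase k, |(k : ℤ) ^ 2 - (j : ℤ) ^ 2| := by
  have hL : (∏ j ∈ (Finset.range (m + 1)).erase 1, |1 - (j : ℤ) ^ 2|) =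
      ∏ j ∈ (Finset.range (m + 1)).erase 1, |((1 : ℕ) : ℤ) ^ 2 - (j : ℤ) ^ 2| := by
    apply prod_congr rfl; intro j _; norm_num
  have h1 := prod_eq m 1 le_rfl hm
  rw [hL]
  rcases Nat.eq_zero_or_pos k with rfl | hk1
  · -- k = 0 case
    simp only [Nat.cast_zero]
    rw [prod_zero m]
    -- 2 * LHS = (m-1)! * (m+1)!, need (m-1)!*(m+1)! ≤ 2*(m!)^2
    obtain ⟨n, rfl⟩ : ∃ n, m = n + 1 := ⟨m - 1, by omega⟩
    have hfact : (n)! * (n + 1 + 1)! ≤ 2 * ((n + 1)!) ^ 2 := by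
      rw [Nat.factorial_succ (n + 1), Nat.factorial_succ n]
      nlinarith [Nat.factorial_pos n]
    have : n + 1 - 1 = n := by omega
    rw [this] at h1
    have hfact' : ((n)! * (n + 1 + 1)! : ℤ) ≤ 2 * (((n + 1)! : ℕ) : ℤ) ^ 2 := by
      exact_mod_cast hfact
    linarith [h1, hfact']
  · -- 1 ≤ k
    have h2 := prod_eq m k hk1 hk
    have hfact : (m - 1)! * (m + 1)! ≤ (m - k)! * (m + k)! := by
      have := fact_aux (m - k) (k - 1)
      have e1 : m - k + (k - 1) = m - 1 := by omega
      have e2 : m - k + (k - 1) + 2 = m + 1 := by omega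
      have e3 : m - k + 2 * (k - 1) + 2 = m + k := by omega
      rwa [e2, e3, e1] at this
    have hfact' : (((m - 1)! * (m + 1)! : ℕ) : ℤ) ≤ (((m - k)! * (m + k)! : ℕ) : ℤ) := by
      exact_mod_cast hfact
    push_cast at hfact'
    linarith [h1, h2, hfact']
end

section
/- Let k be a nonnegative integer. Then the sum over all nonnegative integers j ≠ k of 1/|j² − k²| is at most π²/3, i.e., Σ_{j ∈ ℕ, j ≠ k} 1/|j² − k²| ≤ π²/3. -/
open Real

lemma hasSum_int_one_div_sq :
    HasSum (fun m : ℤ => (1 : ℝ) / (m : ℝ) ^ 2) (Real.pi ^ 2 / 3) := by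
  have h1 : HasSum (fun n : ℕ => (1 : ℝ) / (n : ℝ) ^ 2) (Real.pi ^ 2 / 6) := hasSum_zeta_two
  have h2 : HasSum (fun n : ℕ => (1 : ℝ) / ((-(n + 1) : ℤ) : ℝ) ^ 2) (Real.pi ^ 2 / 6) := by
    have h3 : HasSum (fun n : ℕ => (1 : ℝ) / ((n + 1 : ℕ) : ℝ) ^ 2) (Real.pi ^ 2 / 6) := by
      have := (hasSum_nat_add_iff' (f := fun n : ℕ => (1 : ℝ) / (n : ℝ) ^ 2) 1).mpr h1
      simpa using this
    refine h3.congr_fun fun n => ?_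
    push_cast
    ring_nf
  have := h1.of_nat_of_neg_add_one (f := fun m : ℤ => (1 : ℝ) / (m : ℝ) ^ 2)
    (by exact_mod_cast h2)
  convert this using 1
  ring

lemma key_le (k : ℕ) (j : {j : ℕ // j ≠ k}) :
    (1 : ℝ) / |((j : ℕ) : ℝ) ^ 2 - (k : ℝ) ^ 2| ≤
      (1 : ℝ) / ((((j : ℕ) : ℤ) - (k : ℤ) : ℤ) : ℝ) ^ 2 := by
  obtain ⟨j, hj⟩ := j
  have hne : ((j : ℝ) - k) ≠ 0 := by
    simp only [sub_ne_zero]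
    exact_mod_cast fun h => hj (Nat.cast_injective h)
  have hpos : (0 : ℝ) < ((j : ℝ) - k) ^ 2 := by positivity
  have hle : ((j : ℝ) - k) ^ 2 ≤ |((j : ℕ) : ℝ) ^ 2 - (k : ℝ) ^ 2| := by
    have habs : |((j : ℕ) : ℝ) ^ 2 - (k : ℝ) ^ 2| = |(j : ℝ) - k| * ((j : ℝ) + k) := by
      rw [show ((j : ℕ) : ℝ) ^ 2 - (k : ℝ) ^ 2 = ((j : ℝ) - k) * ((j : ℝ) + k) by ring,
        abs_mul]
      congr 1
      exact abs_of_nonneg (by positivity)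
    rw [habs, ← sq_abs]
    have h1 : |(j : ℝ) - k| ≤ (j : ℝ) + k := by
      rw [abs_sub_le_iff]
      constructor <;> [linarith [Nat.cast_nonneg (α := ℝ) k]; linarith [Nat.cast_nonneg (α := ℝ) j]]
    have h2 : (0 : ℝ) ≤ |(j : ℝ) - k| := abs_nonneg _
    nlinarith
  have := one_div_le_one_div_of_le hpos hle
  push_cast
  linarith

theorem stmt9 (k : ℕ) :
    (∑' j : {j : ℕ // j ≠ k}, (1 : ℝ) / |((j : ℕ) : ℝ) ^ 2 - (k : ℝ) ^ 2|)
      ≤ Real.pi ^ 2 / 3 := by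
  set ι : {j : ℕ // j ≠ k} → ℤ := fun j => ((j : ℕ) : ℤ) - k with hι
  have hinj : Function.Injective ι := by
    intro a b hab
    simp only [hι, sub_left_inj] at hab
    exact Subtype.ext (by exact_mod_cast hab)
  have hg : Summable (fun m : ℤ => (1 : ℝ) / (m : ℝ) ^ 2) := hasSum_int_one_div_sq.summable
  have hgs : Summable (fun j : {j : ℕ // j ≠ k} => (1 : ℝ) / ((ι j : ℤ) : ℝ) ^ 2) :=
    hg.comp_injective hinj
  have hfs : Summable (fun j : {j : ℕ // j ≠ k} =>
      (1 : ℝ) / |((j : ℕ) : ℝ) ^ 2 - (k : ℝ) ^ 2|) := by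
    refine Summable.of_nonneg_of_le (fun j => by positivity) (fun j => ?_) hgs
    exact key_le k j
  have h1 : (∑' j : {j : ℕ // j ≠ k}, (1 : ℝ) / |((j : ℕ) : ℝ) ^ 2 - (k : ℝ) ^ 2|)
      ≤ ∑' m : ℤ, (1 : ℝ) / (m : ℝ) ^ 2 := by
    refine Summable.tsum_le_tsum_of_inj ι hinj (fun c _ => by positivity)
      (fun j => key_le k j) hfs hg
  rw [hasSum_int_one_div_sq.tsum_eq] at h1
  exact h1
end

section
/- Let n = 2m + 1 be an odd positive integer. Define the (n+1)×(n+1) real matrix A by A_{ij} = (−1)^{j+m} · (cos(jπ/n))^i for 0 ≤ i, j ≤ n, and define y ∈ ℝ^{n+1} by y_0 = 1/(2n), y_j = (1/n)·sec²(jπ/n) for 1 ≤ j ≤ n−1, and y_n = 1/(2n). Then y is the unique solution of A·y = e_1, where e_1 = (0,1,0,…,0)^T is the vector with 1 in coordinate i = 1 and 0 elsewhere. -/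
/-!
Put θⱼ = jπ/n and let wⱼ be the trapezoid weights (1/2 at j = 0, n and 1 otherwise). Then
yⱼ = wⱼ / (n cos² θⱼ), so row i of A·y is (-1)ᵐ/n · ∑ⱼ wⱼ (-1)ʲ cos^(i-2) θⱼ. The trapezoid rule
on these nodes annihilates cos (rθ) for 0 < r < 2n. As (-1)ʲ = cos (nθⱼ), product-to-sum formulas
kill every row i ≥ 2, and the expansion
cos ((2m+1)θ) / cos θ = (-1)ᵐ (1 + 2 ∑_{k=1}^m (-1)ᵏ cos (2kθ)) makes row 1 equal to 1. Row 0
vanishes because n is odd, so j ↦ n - j flips the sign of (-1)ʲ and leaves cos² θⱼ unchanged.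
For uniqueness, A is the transpose of the Vandermonde matrix of the distinct nodes cos θⱼ times
an invertible diagonal matrix.
-/

open Real Finset Matrix

noncomputable def trapezoidWeight (n j : ℕ) : ℝ := if j = 0 ∨ j = n then 1 / 2 else 1

lemma sum_trapezoidWeight_mul {n : ℕ} (hn : n ≠ 0) (f : ℕ → ℝ) :
    ∑ j ∈ range (n + 1), trapezoidWeight n j * f j =
      ∑ j ∈ range (n + 1), f j - (f 0 + f n) / 2 := by
  obtain ⟨n, rfl⟩ := Nat.exists_eq_succ_of_ne_zero hn
  have hmid : ∀ j ∈ range n, trapezoidWeight (n + 1) (j + 1) * f (j + 1) = f (j + 1) := by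
    intro j hj
    rw [trapezoidWeight, if_neg (by grind), one_mul]
  have hfirst : trapezoidWeight (n + 1) 0 = 1 / 2 := if_pos (Or.inl rfl)
  have hlast : trapezoidWeight (n + 1) (n + 1) = 1 / 2 := if_pos (Or.inr rfl)
  rw [sum_range_succ, sum_range_succ', sum_congr rfl hmid, sum_range_succ, sum_range_succ',
    hfirst, hlast]
  ring

lemma sum_trapezoidWeight {n : ℕ} (hn : n ≠ 0) :
    ∑ j ∈ range (n + 1), trapezoidWeight n j = n := by
  simpa using sum_trapezoidWeight_mul hn 1

lemma sum_trapezoidWeight_mul_cos {n r : ℕ} (hr₀ : 0 < r) (hr : r < 2 * n) :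
    ∑ j ∈ range (n + 1), trapezoidWeight n j * cos (r * (j * π / n)) = 0 := by
  have hn : (n : ℝ) ≠ 0 := by norm_cast; omega
  set h := r * π / (2 * n) with hh
  have hsin : sin h ≠ 0 := by
    refine (sin_pos_of_pos_of_lt_pi (by positivity) ?_).ne'
    rw [div_lt_iff₀ (by positivity)]
    have : (r : ℝ) < 2 * n := by exact_mod_cast hr
    nlinarith [pi_pos]
  have hrπ : r * π = 2 * (n * h) := by rw [hh]; field_simp
  have hsum : ∑ j ∈ range (n + 1), cos (r * (j * π / n)) = (1 + cos (r * π)) / 2 := by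
    have hlagrange := sin_mul_sum_cos (n + 1) (2 * h) 0
    simp only [add_zero, mul_div_cancel_left₀ _ (two_ne_zero' ℝ)] at hlagrange
    rw [show (n + 1 : ℕ) * (2 * h) / 2 = n * h + h by push_cast; ring,
      show ((n + 1 : ℕ) - 1 : ℝ) * (2 * h) / 2 = n * h by push_cast; ring] at hlagrange
    have hnodes : ∀ j : ℕ, r * (j * π / n) = 2 * h * j := fun j => by rw [hh]; field_simp
    simp only [hnodes]
    apply mul_left_cancel₀ hsin
    rw [hlagrange, hrπ, cos_two_mul, sin_add]
    have hsc : sin (n * h) * cos (n * h) = 0 := by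
      have := sin_nat_mul_pi r
      rw [hrπ, sin_two_mul] at this
      linarith
    linear_combination cos h * hsc
  rw [sum_trapezoidWeight_mul (by omega), hsum]
  simp only [CharP.cast_eq_zero, zero_mul, zero_div, mul_zero, cos_zero]
  rw [mul_div_cancel_left₀ _ hn]
  ring

lemma trapezoidWeight_sub_self {n j : ℕ} (hj : j ≤ n) :
    trapezoidWeight n (n - j) = trapezoidWeight n j := by
  simp only [trapezoidWeight]
  congr 1
  apply propext
  omega

lemma cos_nat_mul_pi_div_ne_zero {n : ℕ} (hn : Odd n) (j : ℕ) : cos (j * π / n) ≠ 0 := by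
  rw [Ne, cos_eq_zero_iff]
  rintro ⟨k, hk⟩
  have hn0 : (n : ℝ) ≠ 0 := by norm_cast; exact hn.pos.ne'
  have hreal : (2 * j : ℝ) = (2 * k + 1) * n := by
    field_simp at hk
    nlinarith [pi_pos]
  have hint : (2 * j : ℤ) = (2 * k + 1) * n := by exact_mod_cast hreal
  have hodd : Odd ((2 * k + 1) * (n : ℤ)) := (odd_two_mul_add_one k).mul (hn.natCast)
  rw [← hint] at hodd
  exact Int.not_even_iff_odd.mpr hodd (even_two_mul _)

lemma cos_mul_two_mul_sum_neg_one_pow_mul_cos_sub_one (m : ℕ) (θ : ℝ) :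
    cos θ * (2 * ∑ k ∈ range (m + 1), (-1) ^ k * cos (2 * k * θ) - 1) =
      (-1) ^ m * cos ((2 * m + 1) * θ) := by
  induction m with
  | zero => norm_num
  | succ m ih =>
    have hprod : 2 * cos θ * cos (2 * (m + 1) * θ) =
        cos ((2 * (m + 1) + 1) * θ) + cos ((2 * m + 1) * θ) := by
      rw [show (2 * m + 1) * θ = 2 * (m + 1) * θ - θ by ring, add_mul, one_mul, cos_add, cos_sub]
      ring
    rw [sum_range_succ, pow_succ]
    push_cast
    linear_combination ih - (-1) ^ m * hprod

noncomputable def alternatingTrapezoidSum (n : ℕ) (f : ℝ → ℝ) : ℝ :=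
  ∑ j ∈ range (n + 1), trapezoidWeight n j * (-1) ^ j * f (j * π / n)

namespace alternatingTrapezoidSum

variable {n : ℕ}

lemma congr_nodes {f g : ℝ → ℝ} (h : ∀ j ≤ n, f (j * π / n) = g (j * π / n)) :
    alternatingTrapezoidSum n f = alternatingTrapezoidSum n g :=
  sum_congr rfl fun j hj => by rw [h j (Nat.lt_succ_iff.mp (mem_range.mp hj))]

lemma add (f g : ℝ → ℝ) :
    alternatingTrapezoidSum n (f + g) =
      alternatingTrapezoidSum n f + alternatingTrapezoidSum n g := by
  simp only [alternatingTrapezoidSum, Pi.add_apply, mul_add, sum_add_distrib]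

lemma smul (c : ℝ) (f : ℝ → ℝ) :
    alternatingTrapezoidSum n (c • f) = c * alternatingTrapezoidSum n f := by
  simp only [alternatingTrapezoidSum, Pi.smul_apply, smul_eq_mul, mul_sum]
  exact sum_congr rfl fun j _ => by ring

lemma cos_mul_cos_pow_eq_zero {q k : ℕ} (h : k + q < n) :
    alternatingTrapezoidSum n (fun θ => cos (k * θ) * cos θ ^ q) = 0 := by
  induction q generalizing k with
  | zero =>
    have hn : (n : ℝ) ≠ 0 := by norm_cast; omega
    have hprod : ∀ j : ℕ, (-1) ^ j * cos (k * (j * π / n)) =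
        (cos ((n + k : ℕ) * (j * π / n)) + cos ((n - k : ℕ) * (j * π / n))) / 2 := by
      intro j
      rw [← cos_nat_mul_pi]
      set θ := j * π / n
      rw [show j * π = n * θ by simp only [θ]; field_simp]
      push_cast [Nat.cast_sub (show k ≤ n by omega)]
      rw [add_mul, sub_mul, cos_add, cos_sub]
      ring
    calc alternatingTrapezoidSum n (fun θ => cos (k * θ) * cos θ ^ 0)
        = ∑ j ∈ range (n + 1), (trapezoidWeight n j * cos ((n + k : ℕ) * (j * π / n)) +
            trapezoidWeight n j * cos ((n - k : ℕ) * (j * π / n))) / 2 :=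
          sum_congr rfl fun j _ => by dsimp only; rw [pow_zero, mul_one, mul_assoc, hprod]; ring
      _ = 0 := by
          rw [← sum_div, sum_add_distrib, sum_trapezoidWeight_mul_cos (by omega) (by omega),
            sum_trapezoidWeight_mul_cos (by omega) (by omega)]
          simp
  | succ q ih =>
    cases k with
    | zero =>
      simpa [pow_succ', ← mul_assoc] using ih (k := 1) (by omega)
    | succ k =>
      have hsplit : (fun θ => cos ((k + 1 : ℕ) * θ) * cos θ ^ (q + 1)) =
          (1 / 2 : ℝ) • ((fun θ => cos ((k + 2 : ℕ) * θ) * cos θ ^ q) +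
            fun θ => cos (k * θ) * cos θ ^ q) := by
        funext θ
        simp only [Pi.smul_apply, Pi.add_apply, smul_eq_mul]
        push_cast
        rw [show (k + 2 : ℝ) * θ = (k + 1) * θ + θ by ring,
          show (k : ℝ) * θ = (k + 1) * θ - θ by ring, cos_add, cos_sub]
        ring
      rw [hsplit, smul, add, ih (by omega), ih (by omega)]
      simp

lemma comp_cos_eq_zero_of_even (hn : Odd n) {g : ℝ → ℝ} (hg : ∀ x, g (-x) = g x) :
    alternatingTrapezoidSum n (fun θ => g (cos θ)) = 0 := by
  set F : ℕ → ℝ := fun j => trapezoidWeight n j * (-1) ^ j * g (cos (j * π / n))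
  have hn0 : (n : ℝ) ≠ 0 := by norm_cast; exact hn.pos.ne'
  have hreflect : ∀ j ∈ range (n + 1), F (n - j) = -F j := by
    intro j hj
    have hjn : j ≤ n := Nat.lt_succ_iff.mp (mem_range.mp hj)
    have hsign : (-1 : ℝ) ^ (n - j) * (-1) ^ j = -1 := by
      rw [← pow_add, Nat.sub_add_cancel hjn, hn.neg_one_pow]
    have hcos : cos ((n - j : ℕ) * π / n) = -cos (j * π / n) := by
      rw [Nat.cast_sub hjn, ← cos_pi_sub]
      congr 1
      field_simp
    have hsq : (-1 : ℝ) ^ j * (-1) ^ j = 1 := by rw [← mul_pow]; norm_num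
    simp only [F, trapezoidWeight_sub_self hjn, hcos, hg]
    linear_combination (trapezoidWeight n j * g (cos (j * π / n))) *
      ((-1) ^ j * hsign - (-1) ^ (n - j) * hsq)
  have hsum : ∑ j ∈ range (n + 1), F j = ∑ j ∈ range (n + 1), -F j := by
    rw [← sum_range_reflect]
    exact sum_congr rfl fun j hj => by simpa using hreflect j hj
  change ∑ j ∈ range (n + 1), F j = 0
  rw [sum_neg_distrib] at hsum
  linarith

lemma inv_cos {m : ℕ} (hn : n = 2 * m + 1) :
    alternatingTrapezoidSum n (fun θ => (cos θ)⁻¹) = (-1) ^ m * n := by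
  have hn0 : n ≠ 0 := by omega
  have hterm : ∀ j ∈ range (n + 1), trapezoidWeight n j * (-1) ^ j * (cos (j * π / n))⁻¹ =
      (-1) ^ m * (2 * ∑ k ∈ range (m + 1), (-1) ^ k *
        (trapezoidWeight n j * cos ((2 * k : ℕ) * (j * π / n))) - trapezoidWeight n j) := by
    intro j _
    set θ := j * π / n with hθ
    set D := 2 * ∑ k ∈ range (m + 1), (-1) ^ k * cos (2 * k * θ) - 1
    have hc : cos θ ≠ 0 := cos_nat_mul_pi_div_ne_zero ⟨m, hn⟩ j
    have hid := cos_mul_two_mul_sum_neg_one_pow_mul_cos_sub_one m θ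
    rw [show (2 * m + 1 : ℝ) * θ = j * π by rw [hθ, hn]; push_cast; field_simp,
      cos_nat_mul_pi] at hid
    have hinv : (-1) ^ j * (cos θ)⁻¹ = (-1) ^ m * D :=
      calc (-1) ^ j * (cos θ)⁻¹ = ((-1) ^ m * (-1) ^ m) * (-1) ^ j * (cos θ)⁻¹ := by
            rw [← mul_pow]; norm_num
        _ = (-1) ^ m * D * cos θ * (cos θ)⁻¹ := by rw [mul_assoc ((-1) ^ m), ← hid]; ring
        _ = (-1) ^ m * D := mul_inv_cancel_right₀ hc _
    have hpull :
        ∑ k ∈ range (m + 1), (-1) ^ k * (trapezoidWeight n j * cos ((2 * k : ℕ) * θ)) =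
          trapezoidWeight n j * ∑ k ∈ range (m + 1), (-1) ^ k * cos (2 * k * θ) := by
      rw [mul_sum]
      exact sum_congr rfl fun k _ => by push_cast; ring
    rw [hpull]
    linear_combination trapezoidWeight n j * hinv
  rw [alternatingTrapezoidSum, sum_congr rfl hterm, ← mul_sum, sum_sub_distrib, ← mul_sum,
    sum_comm, sum_trapezoidWeight hn0]
  have hconst :
      ∑ j ∈ range (n + 1), trapezoidWeight n j * cos ((2 * 0 : ℕ) * (j * π / n)) = n := by
    simpa using sum_trapezoidWeight hn0
  simp_rw [← mul_sum]
  rw [sum_range_succ', sum_eq_zero fun k hk => by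
    rw [sum_trapezoidWeight_mul_cos (by omega) (by simp at hk; omega), mul_zero], hconst]
  ring

lemma pow_mul_inv_sq {m i : ℕ} (hn : n = 2 * m + 1) (hi : i ≤ n) :
    alternatingTrapezoidSum n (fun θ => cos θ ^ i * (cos θ ^ 2)⁻¹) =
      if i = 1 then (-1 : ℝ) ^ m * n else 0 := by
  match i with
  | 0 =>
    simpa using comp_cos_eq_zero_of_even ⟨m, hn⟩ (g := fun x => (x ^ 2)⁻¹) (by simp)
  | 1 =>
    rw [if_pos rfl, ← inv_cos hn]
    congr 1
    funext θ
    rw [pow_one, sq, ← div_eq_mul_inv, div_self_mul_self']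
  | q + 2 =>
    rw [if_neg (by omega), ← cos_mul_cos_pow_eq_zero (n := n) (k := 0) (q := q) (by omega)]
    refine congr_nodes fun j _ => ?_
    have hc := cos_nat_mul_pi_div_ne_zero ⟨m, hn⟩ j
    rw [pow_add, mul_inv_cancel_right₀ (pow_ne_zero 2 hc), Nat.cast_zero, zero_mul, cos_zero,
      one_mul]

end alternatingTrapezoidSum

lemma trapezoidWeight_div_mul_inv_cos_sq {n j : ℕ} (hn : n ≠ 0) :
    trapezoidWeight n j / n * (cos (j * π / n) ^ 2)⁻¹ =
      if j = 0 ∨ j = n then 1 / (2 * (n : ℝ)) else 1 / n * (cos (j * π / n) ^ 2)⁻¹ := by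
  have hn' : (n : ℝ) ≠ 0 := by exact_mod_cast hn
  unfold trapezoidWeight
  split_ifs with h
  · rcases h with rfl | rfl
    · rw [Nat.cast_zero, zero_mul, zero_div, cos_zero]
      ring
    · rw [mul_div_cancel_left₀ π hn', cos_pi]
      ring
  · ring

lemma injective_cos_nat_mul_pi_div {n : ℕ} (hn : n ≠ 0) :
    Function.Injective fun j : Fin (n + 1) => cos ((j : ℕ) * π / n) := by
  have hn' : (0 : ℝ) < n := by positivity
  have hmem : ∀ j : Fin (n + 1), (j : ℕ) * π / n ∈ Set.Icc 0 π := fun j => by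
    refine ⟨by positivity, ?_⟩
    rw [div_le_iff₀ hn', mul_comm]
    exact mul_le_mul_of_nonneg_left (by exact_mod_cast j.is_le) pi_pos.le
  intro a b hab
  have := injOn_cos (hmem a) (hmem b) hab
  field_simp at this
  exact Fin.ext (by exact_mod_cast this)

lemma Matrix.mulVec_injective_vandermonde_transpose_mul_diagonal {K : Type*} [Field K] {n : ℕ}
    {v : Fin n → K} (hv : Function.Injective v) {d : Fin n → K} (hd : ∀ j, d j ≠ 0) :
    Function.Injective ((vandermonde v)ᵀ * diagonal d).mulVec := by
  refine mulVec_injective_iff_isUnit.mpr <|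
    (isUnit_iff_isUnit_det _).mpr (isUnit_iff_ne_zero.mpr ?_)
  rw [det_mul, det_transpose, det_diagonal]
  exact mul_ne_zero (det_vandermonde_ne_zero_iff.mpr hv) (prod_ne_zero_iff.mpr fun j _ => hd j)

theorem stmt10 (m n : ℕ) (hn : n = 2 * m + 1)
    (A : Matrix (Fin (n + 1)) (Fin (n + 1)) ℝ)
    (hA : ∀ i j : Fin (n + 1),
      A i j = (-1) ^ ((j : ℕ) + m) * (Real.cos ((j : ℕ) * Real.pi / n)) ^ (i : ℕ))
    (y : Fin (n + 1) → ℝ)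
    (hy : ∀ j : Fin (n + 1),
      y j = if (j : ℕ) = 0 ∨ (j : ℕ) = n then 1 / (2 * (n : ℝ))
        else (1 / (n : ℝ)) * ((Real.cos ((j : ℕ) * Real.pi / n)) ^ 2)⁻¹)
    (e1 : Fin (n + 1) → ℝ)
    (he1 : ∀ i : Fin (n + 1), e1 i = if (i : ℕ) = 1 then 1 else 0) :
    A.mulVec y = e1 ∧ ∀ y' : Fin (n + 1) → ℝ, A.mulVec y' = e1 → y' = y := by
  have hn0 : n ≠ 0 := by omega
  have hrow : ∀ i : Fin (n + 1), A.mulVec y i = (-1) ^ m / n *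
      alternatingTrapezoidSum n (fun θ => cos θ ^ (i : ℕ) * (cos θ ^ 2)⁻¹) := by
    intro i
    rw [mulVec, dotProduct, alternatingTrapezoidSum, mul_sum, ← Fin.sum_univ_eq_sum_range]
    refine sum_congr rfl fun j _ => ?_
    rw [hA, hy, ← trapezoidWeight_div_mul_inv_cos_sq hn0, pow_add]
    ring
  have hsol : A.mulVec y = e1 := by
    funext i
    rw [hrow, alternatingTrapezoidSum.pow_mul_inv_sq hn i.is_le, he1]
    split_ifs
    · field_simp
      rw [← pow_mul, mul_comm, pow_mul, neg_one_sq, one_pow]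
    · rw [mul_zero]
  have hA' : A = (vandermonde fun j : Fin (n + 1) => cos ((j : ℕ) * π / n))ᵀ *
      diagonal fun j : Fin (n + 1) => (-1 : ℝ) ^ ((j : ℕ) + m) := by
    ext i j
    rw [mul_diagonal, transpose_apply, vandermonde_apply, hA, mul_comm]
  refine ⟨hsol, fun y' hy' => ?_⟩
  rw [hA'] at hsol hy'
  exact mulVec_injective_vandermonde_transpose_mul_diagonal (injective_cos_nat_mul_pi_div hn0)
    (fun j => by simp) (hy'.trans hsol.symm)
end

section
/- Let n = 2m + 1 be an odd positive integer and let p be a real polynomial of degree at most n with sup_{x ∈ [−1,1]} |p(x)| ≤ 1. Then p'(0) ≤ n. -/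
/-!
The odd part `(p(x) - p(-x))/2` of `p` is still bounded by `1`, and it equals `x r(x²)` with
`deg r ≤ m` and `r(0) = p'(0)`. Interpolating `r` at the squares `t_j = c_j²` of the positive
Chebyshev extremal points `c_j = cos (jπ/n)`, `j ≤ m`, gives `r(0) = ∑ r(t_j) L_j(0)`, where the
Lagrange weights `L_j(0)` alternate in sign because `0` lies below all nodes. The bound `|p| ≤ 1`
gives `|r(t_j)| ≤ 1/c_j`, and the odd part `g` of `T_n` attains `g(t_j) = (-1)^j / c_j` with
exactly these alternating signs, so `r(0) ≤ (-1)^m g(0) = (-1)^m T_n'(0) = n`.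
-/

open Polynomial Finset

theorem Finset.sum_range_two_mul_add_two {M : Type*} [AddCommMonoid M] (f : ℕ → M) (m : ℕ) :
    ∑ i ∈ range (2 * m + 2), f i = ∑ j ∈ range (m + 1), (f (2 * j) + f (2 * j + 1)) := by
  induction m with
  | zero => simp [sum_range_succ]
  | succ m ih =>
    rw [show 2 * (m + 1) + 2 = 2 * m + 2 + 1 + 1 by ring, sum_range_succ, sum_range_succ, ih,
      sum_range_succ (n := m + 1), add_assoc]
    rfl

namespace Polynomial

variable {R : Type*} [CommRing R]

/-- `X * (oddPart p m).comp (X ^ 2)` is the odd part of `p` as soon as `p.natDegree ≤ 2 * m + 1`. -/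
noncomputable def oddPart (p : R[X]) (m : ℕ) : R[X] :=
  ∑ j ∈ range (m + 1), C (p.coeff (2 * j + 1)) * X ^ j

theorem degree_oddPart_lt [Nontrivial R] (p : R[X]) (m : ℕ) :
    (oddPart p m).degree < ↑(m + 1) :=
  (degree_sum_le _ _).trans_lt <| (Finset.sup_lt_iff (WithBot.bot_lt_coe _)).2 fun j hj =>
    (degree_C_mul_X_pow_le j _).trans_lt (by exact_mod_cast mem_range.1 hj)

theorem derivative_eval_zero (p : R[X]) : p.derivative.eval 0 = p.coeff 1 := by
  rw [← coeff_zero_eq_eval_zero, coeff_derivative]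
  simp

theorem eval_zero_oddPart (p : R[X]) (m : ℕ) : (oddPart p m).eval 0 = p.coeff 1 := by
  simp [oddPart, eval_finsetSum, sum_range_succ']

theorem two_mul_mul_eval_oddPart {p : R[X]} {m : ℕ} (hp : p.natDegree ≤ 2 * m + 1) (x : R) :
    2 * (x * (oddPart p m).eval (x ^ 2)) = p.eval x - p.eval (-x) := by
  have hsum (y : R) : p.eval y = ∑ i ∈ range (2 * m + 2), p.coeff i * y ^ i :=
    eval_eq_sum_range' (by omega) y
  simp only [hsum, ← sum_sub_distrib, sum_range_two_mul_add_two, oddPart, eval_finsetSum,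
    mul_sum, eval_mul, eval_C, eval_pow, eval_X]
  refine sum_congr rfl fun j _ => ?_
  rw [Even.neg_pow ⟨j, by ring⟩, Odd.neg_pow ⟨j, by ring⟩, pow_succ, pow_mul]
  ring

theorem abs_mul_eval_oddPart_le_one {p : ℝ[X]} {m : ℕ} (hp : p.natDegree ≤ 2 * m + 1)
    (hbound : ∀ x ∈ Set.Icc (-1 : ℝ) 1, |p.eval x| ≤ 1) {x : ℝ} (hx : x ∈ Set.Icc (-1 : ℝ) 1) :
    |x * (oddPart p m).eval (x ^ 2)| ≤ 1 := by
  have hodd := two_mul_mul_eval_oddPart hp x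
  have hpos := abs_le.1 (hbound x hx)
  have hneg := abs_le.1 (hbound (-x) ⟨neg_le_neg hx.2, by linarith [hx.1]⟩)
  exact abs_le.2 ⟨by linarith, by linarith⟩

end Polynomial

namespace Lagrange

variable {F : Type*} [Field F]

theorem eval_eq_sum_eval_basis {ι : Type*} [DecidableEq ι] {s : Finset ι} {v : ι → F}
    (hvs : Set.InjOn v s) {f : F[X]} (hf : f.degree < #s) (x : F) :
    f.eval x = ∑ i ∈ s, f.eval (v i) * (Lagrange.basis s v i).eval x := by
  conv_lhs => rw [eq_interpolate hvs hf]
  simp [interpolate_apply, eval_finsetSum]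

variable [LinearOrder F] [IsStrictOrderedRing F]

theorem neg_one_pow_mul_eval_basis_nonneg {m : ℕ} {v : ℕ → F}
    (hv : StrictAntiOn v (range (m + 1))) {x : F} (hx : ∀ i ∈ range (m + 1), x < v i)
    {j : ℕ} (hj : j ∈ range (m + 1)) :
    0 ≤ (-1) ^ (m + j) * (Lagrange.basis (range (m + 1)) v j).eval x := by
  set ε : ℕ → F := fun i => if j < i then -1 else 1
  -- the factor `(x - v i) / (v j - v i)` of the basis polynomial is negative exactly for `j < i`
  have hsign : (-1) ^ (m + j) = ∏ i ∈ (range (m + 1)).erase j, ε i := by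
    have hcount : #(((range (m + 1)).erase j).filter (j < ·)) = m - j := by
      rw [show ((range (m + 1)).erase j).filter (j < ·) = Ioc j m by ext; simp; omega,
        Nat.card_Ioc]
    rw [prod_ite, prod_const, prod_const, one_pow, mul_one, hcount,
      show m + j = (m - j) + 2 * j by have := mem_range.1 hj; omega, pow_add, pow_mul]
    simp
  rw [hsign, Lagrange.basis, eval_prod, ← prod_mul_distrib]
  refine prod_nonneg fun i hi => ?_
  obtain ⟨hij, hi⟩ := mem_erase.1 hi
  have hxi : x - v i < 0 := sub_neg.2 (hx i hi)
  simp only [ε, basisDivisor, eval_mul, eval_C, eval_sub, eval_X]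
  rcases hij.lt_or_gt with hij | hij
  · have : v j - v i < 0 := sub_neg.2 (hv hi hj hij)
    rw [if_neg hij.not_gt, one_mul]
    exact mul_nonneg_of_nonpos_of_nonpos (inv_nonpos.2 this.le) hxi.le
  · have : 0 < v j - v i := sub_pos.2 (hv hj hi hij)
    rw [if_pos hij, neg_one_mul, ← mul_neg]
    exact mul_nonneg (inv_nonneg.2 this.le) (neg_nonneg.2 hxi.le)

theorem eval_le_of_abs_eval_le_alternating {m : ℕ} {v : ℕ → F}
    (hv : StrictAntiOn v (range (m + 1))) {x : F} (hx : ∀ i ∈ range (m + 1), x < v i)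
    {f g : F[X]} (hf : f.degree < ↑(m + 1)) (hg : g.degree < ↑(m + 1))
    (hfg : ∀ i ∈ range (m + 1), |f.eval (v i)| ≤ (-1) ^ i * g.eval (v i)) :
    f.eval x ≤ (-1) ^ m * g.eval x := by
  rw [← card_range (m + 1)] at hf hg
  rw [eval_eq_sum_eval_basis hv.injOn hf, eval_eq_sum_eval_basis hv.injOn hg, mul_sum]
  refine sum_le_sum fun i hi => ?_
  set b := (Lagrange.basis (range (m + 1)) v i).eval x
  have hb := neg_one_pow_mul_eval_basis_nonneg hv hx hi
  have habs : |b| = (-1) ^ (m + i) * b := by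
    rw [← abs_of_nonneg hb, abs_mul, abs_neg_one_pow, one_mul]
  have hsq : ((-1 : F) ^ i) * (-1) ^ i = 1 := by
    rw [← pow_add, ← two_mul, pow_mul]
    simp
  calc f.eval (v i) * b ≤ |f.eval (v i)| * |b| := by rw [← abs_mul]; exact le_abs_self _
    _ ≤ ((-1) ^ i * g.eval (v i)) * ((-1) ^ (m + i) * b) := by
      rw [habs]; exact mul_le_mul_of_nonneg_right (hfg i hi) hb
    _ = (-1) ^ m * (g.eval (v i) * b) := by
      linear_combination (g.eval (v i) * b * (-1) ^ m) * hsq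

end Lagrange

namespace Polynomial.Chebyshev

open Real

theorem coeff_one_T_two_mul_add_one {R : Type*} [CommRing R] (m : ℕ) :
    (T R ((2 * m + 1 : ℕ) : ℤ)).coeff 1 = (-1) ^ m * (2 * m + 1) := by
  rw [← derivative_eval_zero, T_derivative_eq_U, eval_mul,
    show ((2 * m + 1 : ℕ) : ℤ) - 1 = 2 * (m : ℤ) by push_cast; ring, U_eval_two_mul_zero,
    Int.cast_negOnePow_natCast, eval_intCast]
  push_cast
  ring

theorem node_pos {n i : ℕ} (h : 2 * i < n) : 0 < node n i := by
  apply cos_pos_of_mem_Ioo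
  have hn : (0 : ℝ) < n := by exact_mod_cast (show 0 < n by omega)
  have hi : 2 * (i : ℝ) < n := by exact_mod_cast h
  constructor
  · have : 0 ≤ (i : ℝ) * π / n := by positivity
    linarith [pi_pos]
  · rw [div_lt_iff₀ hn]
    nlinarith [pi_pos]

theorem strictAntiOn_node_sq (m : ℕ) :
    StrictAntiOn (fun i => node (2 * m + 1) i ^ 2) (range (m + 1)) := by
  intro i hi j hj hij
  have hj' : j < m + 1 := mem_range.1 hj
  have hpos := node_pos (n := 2 * m + 1) (i := j) (by omega)
  exact pow_lt_pow_left₀ (node_lt (by omega) hij) hpos.le two_ne_zero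

theorem node_mul_eval_oddPart_T (m : ℕ) {i : ℕ} (hi : i ≤ 2 * m + 1) :
    node (2 * m + 1) i * (oddPart (T ℝ ((2 * m + 1 : ℕ) : ℤ)) m).eval (node (2 * m + 1) i ^ 2)
      = (-1) ^ i := by
  have hodd := two_mul_mul_eval_oddPart (m := m) (p := T ℝ ((2 * m + 1 : ℕ) : ℤ))
    (by rw [natDegree_T, Int.natAbs_natCast]) (node (2 * m + 1) i)
  have hsign : (((2 * m + 1 : ℕ) : ℤ).negOnePow : ℝ) = -1 := by
    rw [Int.cast_negOnePow_natCast, pow_succ, pow_mul]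
    simp
  rw [T_eval_neg, eval_T_real_node (mem_Iic.2 hi), hsign] at hodd
  linarith

theorem abs_eval_oddPart_le_eval_oddPart_T {p : ℝ[X]} {m : ℕ}
    (hp : p.natDegree ≤ 2 * m + 1) (hbound : ∀ x ∈ Set.Icc (-1 : ℝ) 1, |p.eval x| ≤ 1)
    {i : ℕ} (hi : i ≤ m) :
    |(oddPart p m).eval (node (2 * m + 1) i ^ 2)|
      ≤ (-1) ^ i * (oddPart (T ℝ ((2 * m + 1 : ℕ) : ℤ)) m).eval (node (2 * m + 1) i ^ 2) := by
  set c := node (2 * m + 1) i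
  have hc : 0 < c := node_pos (by omega)
  refine le_of_mul_le_mul_left ?_ hc
  calc c * |(oddPart p m).eval (c ^ 2)| = |c * (oddPart p m).eval (c ^ 2)| := by
        rw [abs_mul, abs_of_pos hc]
    _ ≤ 1 := abs_mul_eval_oddPart_le_one hp hbound node_mem_Icc
    _ = (-1) ^ i * (c * (oddPart (T ℝ ((2 * m + 1 : ℕ) : ℤ)) m).eval (c ^ 2)) := by
        rw [node_mul_eval_oddPart_T m (by omega), ← pow_add, ← two_mul, pow_mul]
        simp
    _ = c * ((-1) ^ i * (oddPart (T ℝ ((2 * m + 1 : ℕ) : ℤ)) m).eval (c ^ 2)) := by ring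

end Polynomial.Chebyshev

open Polynomial.Chebyshev

theorem stmt11 (m n : ℕ) (hn : n = 2 * m + 1) (p : Polynomial ℝ)
    (hdeg : p.natDegree ≤ n)
    (hbound : ∀ x ∈ Set.Icc (-1 : ℝ) 1, |p.eval x| ≤ 1) :
    p.derivative.eval 0 ≤ n := by
  subst hn
  have hnodes_pos (i : ℕ) (hi : i ∈ range (m + 1)) : 0 < node (2 * m + 1) i ^ 2 :=
    pow_pos (node_pos (by have := mem_range.1 hi; omega)) 2
  have key := Lagrange.eval_le_of_abs_eval_le_alternating (strictAntiOn_node_sq m) hnodes_pos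
    (degree_oddPart_lt p m) (degree_oddPart_lt _ m)
    fun i hi => abs_eval_oddPart_le_eval_oddPart_T hdeg hbound (by have := mem_range.1 hi; omega)
  rw [eval_zero_oddPart, eval_zero_oddPart, coeff_one_T_two_mul_add_one] at key
  calc p.derivative.eval 0 = p.coeff 1 := derivative_eval_zero p
    _ ≤ (-1) ^ m * ((-1) ^ m * (2 * m + 1)) := key
    _ = ((2 * m + 1 : ℕ) : ℝ) := by
      rw [← mul_assoc, ← pow_add, ← two_mul, pow_mul]
      push_cast
      simp
end

section
/- Let p be a real polynomial of degree at most n. Then for every x₀ ∈ (−1, 1), |p'(x₀)| ≤ ((n+1)/(1 − |x₀|)) · ‖p‖_{[-1,1]}. -/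
/-!
Rescaling by `t ↦ x₀ + (1 - |x₀|) t`, which maps `[-1, 1]` into `[-1, 1]`, reduces the claim
to `|q'(0)| ≤ (n + 1) M` for `|q| ≤ M` on `[-1, 1]`. Write the odd part of `q` as
`(q(t) - q(-t)) / 2 = t s(t²)`, so that `q'(0) = s(0)`, and put `P(w) = s(1 - w²)`. Substituting
`t = √(1 - w²)` gives `|P(w)| √(1 - w²) ≤ M`, and Schur's inequality at the endpoint bounds
`|P(1)| = |s(0)|` by `(n + 1) M`.

Schur's endpoint inequality comes from Lagrange interpolation of `P` at the zeros `a` of the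
Chebyshev polynomial `T_N`, `N = n + 1`. At these nodes `|T_N'(a)| √(1 - a²) = N`, so
`|P(1)| ≤ (M / N) ∑ 1 / (1 - a) = (M / N) T_N'(1) / T_N(1) = N M`.
-/

open Polynomial Real Set
open scoped Finset

namespace Polynomial

variable {R : Type*} [CommRing R]

theorem coeff_comp_neg_X (p : R[X]) (n : ℕ) : (p.comp (-X)).coeff n = (-1) ^ n * p.coeff n := by
  induction p using Polynomial.induction_on' with
  | add p q hp hq => simp [add_comp, hp, hq, mul_add]
  | monomial k a =>
    rw [monomial_comp, show (-X : R[X]) = C (-1) * X by simp, mul_pow, ← C_pow, ← mul_assoc,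
      ← C_mul, coeff_C_mul_X_pow, coeff_monomial]
    rcases eq_or_ne n k with rfl | h
    · rw [if_pos rfl, if_pos rfl, mul_comm]
    · rw [if_neg h, if_neg h.symm, mul_zero]

noncomputable def oddCoeffs (q : R[X]) : R[X] := contract 2 q.divX

theorem coeff_oddCoeffs (q : R[X]) (k : ℕ) : (oddCoeffs q).coeff k = q.coeff (2 * k + 1) := by
  rw [oddCoeffs, coeff_contract two_ne_zero, coeff_divX, mul_comm]

theorem two_mul_natDegree_oddCoeffs_le (q : R[X]) :
    2 * (oddCoeffs q).natDegree ≤ q.natDegree := by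
  suffices (oddCoeffs q).natDegree ≤ q.natDegree / 2 by omega
  refine natDegree_le_iff_coeff_eq_zero.mpr fun k hk => ?_
  rw [coeff_oddCoeffs]
  exact coeff_eq_zero_of_natDegree_lt (by omega)

theorem eval_zero_oddCoeffs (q : R[X]) : (oddCoeffs q).eval 0 = q.derivative.eval 0 := by
  simp [← coeff_zero_eq_eval_zero, coeff_oddCoeffs, coeff_derivative]

theorem sub_comp_neg_X_eq_two_mul_X_mul_expand (q : R[X]) :
    q - q.comp (-X) = 2 * X * expand R 2 (oddCoeffs q) := by
  ext m
  rw [coeff_sub, coeff_comp_neg_X, mul_assoc, ← C_ofNat, coeff_C_mul]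
  rcases m with _ | k
  · simp
  rw [coeff_X_mul]
  obtain ⟨j, rfl | rfl⟩ := Nat.even_or_odd' k
  · rw [Odd.neg_one_pow ⟨j, rfl⟩, coeff_expand two_pos, if_pos (dvd_mul_right 2 j),
      Nat.mul_div_cancel_left _ two_pos, coeff_oddCoeffs]
    ring
  · rw [Even.neg_one_pow ⟨j + 1, by omega⟩, coeff_expand two_pos, if_neg (by omega)]
    simp

variable {K : Type*} [Field K] {Q P : K[X]} {s : Finset K} {x : K}

theorem C_leadingCoeff_mul_nodal_of_roots_eq (hroots : Q.roots = s.val)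
    (hcard : #s = Q.natDegree) : C Q.leadingCoeff * Lagrange.nodal s id = Q := by
  have := C_leadingCoeff_mul_prod_multiset_X_sub_C (p := Q) (by rw [hroots, Finset.card_val, hcard])
  rwa [hroots] at this

theorem eval_derivative_eq_mul_sum_of_roots_eq (hroots : Q.roots = s.val)
    (hcard : #s = Q.natDegree) (hx : Q.eval x ≠ 0) :
    Q.derivative.eval x = Q.eval x * ∑ a ∈ s, (x - a)⁻¹ := by
  have hsplit : Q.Splits := splits_iff_card_roots.mpr (by rw [hroots, Finset.card_val, hcard])
  rw [hsplit.eval_derivative_eq_eval_mul_sum hx, hroots, Finset.sum_map_val]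
  simp only [one_div]

theorem eval_eq_sum_div_derivative_of_roots_eq (hroots : Q.roots = s.val)
    (hcard : #s = Q.natDegree) (hP : P.degree < #s) (hx : Q.eval x ≠ 0) :
    P.eval x = ∑ a ∈ s, Q.eval x / ((x - a) * Q.derivative.eval a) * P.eval a := by
  classical
  have hQ := C_leadingCoeff_mul_nodal_of_roots_eq hroots hcard
  have hc : Q.leadingCoeff ≠ 0 := leadingCoeff_ne_zero.mpr fun h => hx (by simp [h])
  have hxs : ∀ a ∈ s, x ≠ id a := by
    rintro a ha rfl
    refine hx (isRoot_of_mem_roots ?_)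
    simpa [hroots] using ha
  conv_lhs => rw [Lagrange.eq_interpolate (Set.injOn_id _) hP]
  rw [Lagrange.eval_interpolate_not_at_node _ hxs, Finset.mul_sum]
  refine Finset.sum_congr rfl fun a ha => ?_
  rw [Lagrange.nodalWeight_eq_eval_derivative_nodal ha, ← hQ, derivative_C_mul]
  simp only [id, eval_mul, eval_C]
  field_simp

end Polynomial

namespace Polynomial.Chebyshev

theorem eval_T_real_sq_add_one_sub_sq_mul_eval_U_real_sq (n : ℤ) {x : ℝ}
    (hx : x ∈ Icc (-1) 1) :
    (T ℝ n).eval x ^ 2 + (1 - x ^ 2) * (U ℝ (n - 1)).eval x ^ 2 = 1 := by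
  obtain ⟨θ, rfl⟩ : ∃ θ, cos θ = x := ⟨arccos x, cos_arccos hx.1 hx.2⟩
  have hU := U_real_cos θ (n - 1)
  rw [Int.cast_sub, Int.cast_one, sub_add_cancel] at hU
  rw [T_real_cos, ← sin_sq, ← sin_sq_add_cos_sq (n * θ), ← hU]
  ring

theorem one_sub_sq_mul_eval_U_real_sq_of_isRoot {n : ℕ} (hn : n ≠ 0) {a : ℝ}
    (ha : (T ℝ n).IsRoot a) : (1 - a ^ 2) * (U ℝ (n - 1)).eval a ^ 2 = 1 := by
  have ha' : |a| ≤ 1 := by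
    by_contra! h
    have := one_lt_abs_eval_T_real (Int.natCast_ne_zero.mpr hn) h
    norm_num [ha.eq_zero] at this
  simpa [ha.eq_zero] using eval_T_real_sq_add_one_sub_sq_mul_eval_U_real_sq n (abs_le.mp ha')

theorem mem_Ioo_of_isRoot_T_real {n : ℕ} (hn : n ≠ 0) {a : ℝ} (ha : (T ℝ n).IsRoot a) :
    a ∈ Ioo (-1) 1 := by
  have h := one_sub_sq_mul_eval_U_real_sq_of_isRoot hn ha
  have : 0 < 1 - a ^ 2 := pos_of_mul_pos_left (h ▸ one_pos) (sq_nonneg _)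
  constructor <;> nlinarith

theorem exists_finset_roots_T_real (n : ℕ) :
    ∃ s : Finset ℝ, (T ℝ n).roots = s.val ∧ #s = n :=
  ⟨_, roots_T_real n, by
    rw [Finset.card_image_of_injOn ((Finset.range n).nodup_map_iff_injOn.mp (roots_T_real_nodup n)),
      Finset.card_range]⟩

theorem abs_eval_derivative_T_real_mul_sqrt_of_isRoot {n : ℕ} (hn : n ≠ 0) {a : ℝ}
    (ha : (T ℝ n).IsRoot a) : |(T ℝ n).derivative.eval a| * √(1 - a ^ 2) = n := by
  have h := one_sub_sq_mul_eval_U_real_sq_of_isRoot hn ha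
  have : |(U ℝ (n - 1)).eval a| * √(1 - a ^ 2) = 1 := by
    rw [← sqrt_sq_eq_abs, ← sqrt_mul (sq_nonneg _), mul_comm, h, sqrt_one]
  simp [T_derivative_eq_U, abs_mul, mul_assoc, this]

end Polynomial.Chebyshev

open Polynomial.Chebyshev

theorem abs_eval_one_le_of_abs_mul_sqrt_le {d : ℕ} {M : ℝ} {P : ℝ[X]} (hP : P.natDegree ≤ d)
    (hM : ∀ w ∈ Icc (-1 : ℝ) 1, |P.eval w| * √(1 - w ^ 2) ≤ M) :
    |P.eval 1| ≤ (d + 1) * M := by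
  set N := d + 1 with hNd
  have hN : N ≠ 0 := d.succ_ne_zero
  set Q := T ℝ N
  obtain ⟨s, hroots, hsN⟩ := exists_finset_roots_T_real N
  have hcard : #s = Q.natDegree := by rw [hsN, natDegree_T, Int.natAbs_natCast]
  have hPdeg : P.degree < #s := by
    rw [hsN]
    exact (degree_le_of_natDegree_le hP).trans_lt (WithBot.coe_lt_coe.mpr d.lt_succ_self)
  have hroot : ∀ a ∈ s, Q.IsRoot a := fun a ha => isRoot_of_mem_roots (hroots ▸ ha)
  have hQ1 : Q.eval 1 = 1 := T_eval_one ℝ N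
  have hQ1' : Q.eval 1 ≠ 0 := by simp [hQ1]
  have hsum : ∑ a ∈ s, (1 - a)⁻¹ = (N : ℝ) ^ 2 := by
    have := eval_derivative_eq_mul_sum_of_roots_eq hroots hcard hQ1'
    rw [hQ1, one_mul, derivative_T_eval_one] at this
    exact_mod_cast this.symm
  have hterm : ∀ a ∈ s, |Q.eval 1 / ((1 - a) * Q.derivative.eval a) * P.eval a|
      ≤ M / N * (1 - a)⁻¹ := by
    intro a ha
    obtain ⟨ha₀, ha₁⟩ := mem_Ioo_of_isRoot_T_real hN (hroot a ha)
    have hsqrt : 0 < √(1 - a ^ 2) := sqrt_pos.mpr (by nlinarith)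
    have hder := abs_eval_derivative_T_real_mul_sqrt_of_isRoot hN (hroot a ha)
    rw [hQ1, abs_mul, abs_div, abs_one, abs_mul, abs_of_pos (sub_pos.mpr ha₁),
      eq_div_of_mul_eq hsqrt.ne' hder]
    calc 1 / ((1 - a) * (N / √(1 - a ^ 2))) * |P.eval a|
        = |P.eval a| * √(1 - a ^ 2) / N * (1 - a)⁻¹ := by field_simp
      _ ≤ M / N * (1 - a)⁻¹ := by
        have := sub_pos.mpr ha₁
        gcongr
        exact hM a ⟨ha₀.le, ha₁.le⟩
  calc |P.eval 1|
      = |∑ a ∈ s, Q.eval 1 / ((1 - a) * Q.derivative.eval a) * P.eval a| := by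
        rw [← eval_eq_sum_div_derivative_of_roots_eq hroots hcard hPdeg hQ1']
    _ ≤ ∑ a ∈ s, M / N * (1 - a)⁻¹ :=
        (Finset.abs_sum_le_sum_abs _ _).trans (Finset.sum_le_sum hterm)
    _ = (d + 1) * M := by
        rw [← Finset.mul_sum, hsum, hNd]
        field_simp
        push_cast
        ring

theorem abs_derivative_eval_zero_le {n : ℕ} {M : ℝ} {q : ℝ[X]} (hq : q.natDegree ≤ n)
    (hM : ∀ t ∈ Icc (-1 : ℝ) 1, |q.eval t| ≤ M) :
    |q.derivative.eval 0| ≤ (n + 1) * M := by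
  set s := oddCoeffs q
  have hodd : ∀ t, q.eval t - q.eval (-t) = 2 * t * s.eval (t ^ 2) := fun t => by
    simpa [eval_comp] using congrArg (eval t) (sub_comp_neg_X_eq_two_mul_X_mul_expand q)
  have hdeg : (s.comp (1 - X ^ 2)).natDegree ≤ n := by
    have : (1 - X ^ 2 : ℝ[X]).natDegree = 2 := by compute_degree!
    rw [natDegree_comp, this]
    linarith [two_mul_natDegree_oddCoeffs_le q]
  have key := abs_eval_one_le_of_abs_mul_sqrt_le (M := M) hdeg fun w hw => ?_
  · simpa [eval_comp, s, eval_zero_oddCoeffs] using key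
  have hw2 : 0 ≤ 1 - w ^ 2 := by nlinarith [hw.1, hw.2]
  set t := √(1 - w ^ 2)
  have ht₀ : 0 ≤ t := sqrt_nonneg _
  have ht₁ : t ≤ 1 := sqrt_le_one.mpr (by linarith [sq_nonneg w])
  rw [eval_comp, eval_sub, eval_one, eval_pow, eval_X, ← sq_sqrt hw2]
  calc |s.eval (t ^ 2)| * t = |q.eval t - q.eval (-t)| / 2 := by
        rw [hodd, abs_mul, abs_mul, abs_of_nonneg ht₀, abs_two]; ring
    _ ≤ (|q.eval t| + |q.eval (-t)|) / 2 := by gcongr; exact abs_sub _ _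
    _ ≤ M := by linarith [hM t ⟨by linarith, ht₁⟩, hM (-t) ⟨by linarith, by linarith⟩]

theorem abs_derivative_eval_le {n : ℕ} {M : ℝ} {p : ℝ[X]} (hp : p.natDegree ≤ n)
    (hM : ∀ x ∈ Icc (-1 : ℝ) 1, |p.eval x| ≤ M) {x₀ : ℝ}
    (hx₀ : x₀ ∈ Ioo (-1 : ℝ) 1) :
    |p.derivative.eval x₀| ≤ (n + 1) / (1 - |x₀|) * M := by
  set δ := 1 - |x₀|
  have hδ : 0 < δ := sub_pos.mpr (abs_lt.mpr hx₀)
  set q := p.comp (C δ * X + C x₀)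
  have hq : q.natDegree ≤ n := by rwa [natDegree_comp, natDegree_linear hδ.ne', mul_one]
  have hqM : ∀ t ∈ Icc (-1 : ℝ) 1, |q.eval t| ≤ M := by
    rintro t ⟨ht₁, ht₂⟩
    have := neg_abs_le x₀
    have := le_abs_self x₀
    simp only [q, eval_comp, eval_add, eval_mul, eval_C, eval_X]
    refine hM _ ⟨?_, ?_⟩ <;> nlinarith
  have hq' : q.derivative.eval 0 = δ * p.derivative.eval x₀ := by simp [q, derivative_comp]
  have := abs_derivative_eval_zero_le hq hqM
  rw [hq', abs_mul, abs_of_pos hδ] at this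
  rw [div_mul_eq_mul_div, le_div_iff₀ hδ]
  linarith

theorem stmt12 (n : ℕ) (p : Polynomial ℝ) (hdeg : p.natDegree ≤ n)
    (x₀ : ℝ) (hx₀ : x₀ ∈ Set.Ioo (-1 : ℝ) 1) :
    |p.derivative.eval x₀| ≤
      ((n : ℝ) + 1) / (1 - |x₀|) * sSup ((fun x => |p.eval x|) '' Set.Icc (-1 : ℝ) 1) := by
  have hbdd : BddAbove ((fun x => |p.eval x|) '' Icc (-1 : ℝ) 1) :=
    (isCompact_Icc.image p.continuous.abs).bddAbove
  exact abs_derivative_eval_le hdeg (fun x hx => le_csSup hbdd (mem_image_of_mem _ hx)) hx₀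
end

section
/- Let n be a positive integer. Define the (n+1)×(n+1) real matrix B by B_{00} = 1, B_{i0} = 0 for i ≥ 1, and B_{ij} = (−1)^j · (cos(jπ/n) − 1)^i for 1 ≤ j ≤ n and 0 ≤ i ≤ n. Define y ∈ ℝ^{n+1} by y_0 = (2n² + 1)/6, y_j = csc²(jπ/(2n)) for 1 ≤ j ≤ n−1, and y_n = 1/2. Then y is the unique solution of B·y = e_1, where e_1 = (0,1,0,…,0)^T is the vector with 1 in coordinate i = 1 and 0 elsewhere. -/
/-!
Write `c_j = cos (j π / n) - 1` and `ζ = exp (π i / n)`, a primitive `2n`-th root of unity, so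
that `2 ζ^j c_j = (ζ^j - 1)^2` and `(-1)^j = ζ^(n j)`. Since `y_j c_j = -2` for `0 < j < n`,
`y_n c_n = -1`, and the summands are invariant under `j ↦ 2n - j`, row `i` of `B y` becomes a
sum over all `0 < j < 2n`. For `i ≥ 1` it is `-∑_{0<j<2n} (-1)^j c_j^(i-1)`, and the full sum over
`j < 2n` vanishes because `(-1)^j (2 c_j)^k = ζ^((n-k) j) (ζ^j - 1)^(2k)` expands into powers
`ζ^(m j)` with `n - k ≤ m ≤ n + k`, none divisible by `2n` when `k < n`. For `i = 0` it is
`y_0 - ∑_{0<j<2n} (-1)^j / c_j`, evaluated by expanding `1 / (1 - ω)^2` as a polynomial in the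
root of unity `ω = ζ^j`. Uniqueness: removing the first row
and column of `B` leaves a Vandermonde matrix in the distinct nodes `c_1, …, c_n` times an
invertible diagonal matrix.
-/

open Finset Real
open scoped Matrix
open Polynomial.Chebyshev (node node_lt node_eq_one node_eq_neg_one)

section PowerSums

variable {R : Type*} [CommRing R]

theorem sub_one_mul_sum_range_mul_pow (z : R) (m : ℕ) :
    (z - 1) * ∑ k ∈ range m, (k : R) * z ^ k
      = ((m : R) - 1) * z ^ m + 1 - ∑ k ∈ range m, z ^ k := by
  induction m with
  | zero => simp
  | succ m ih =>
    rw [sum_range_succ, sum_range_succ (fun k => z ^ k), mul_add, ih]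
    push_cast
    ring

theorem sub_one_mul_sum_range_sq_mul_pow (z : R) (m : ℕ) :
    (z - 1) * ∑ k ∈ range m, (k : R) ^ 2 * z ^ k
      = ((m : R) - 1) ^ 2 * z ^ m - 2 * ∑ k ∈ range m, (k : R) * z ^ k
        + ∑ k ∈ range m, z ^ k - 1 := by
  induction m with
  | zero => simp
  | succ m ih =>
    rw [sum_range_succ, sum_range_succ (fun k => z ^ k),
      sum_range_succ (fun k => (k : R) * z ^ k), mul_add, ih]
    push_cast
    ring

theorem sum_range_mul_sub_sq_mul_six (c : R) (m : ℕ) :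
    (∑ k ∈ range m, (c * k - (k : R) ^ 2)) * 6
      = 3 * c * m * (m - 1) - m * (m - 1) * (2 * m - 1) := by
  induction m with
  | zero => simp
  | succ m ih =>
    rw [sum_range_succ, add_mul, ih]
    push_cast
    ring

end PowerSums

section RootsOfUnity

variable {K : Type*} [Field K]

theorem geom_sum_eq_zero_of_pow_eq_one {z : K} {m : ℕ} (hz : z ^ m = 1) (hz1 : z ≠ 1) :
    ∑ k ∈ range m, z ^ k = 0 := by
  rw [geom_sum_eq hz1, hz, sub_self, zero_div]

theorem sum_mul_pow_mul_one_sub_sq_of_pow_eq_one {z : K} {m : ℕ} (hz : z ^ m = 1)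
    (hz1 : z ≠ 1) :
    (∑ k ∈ range m, (((m : K) - 2) * k - (k : K) ^ 2) * z ^ k) * (1 - z) ^ 2 = 2 * m := by
  have h0 := geom_sum_eq_zero_of_pow_eq_one hz hz1
  have h1 := sub_one_mul_sum_range_mul_pow z m
  have h2 := sub_one_mul_sum_range_sq_mul_pow z m
  rw [hz, h0] at h1 h2
  have hsplit : ∑ k ∈ range m, (((m : K) - 2) * k - (k : K) ^ 2) * z ^ k
      = ((m : K) - 2) * ∑ k ∈ range m, (k : K) * z ^ k - ∑ k ∈ range m, (k : K) ^ 2 * z ^ k := by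
    rw [mul_sum, ← sum_sub_distrib]
    exact sum_congr rfl fun k _ => by ring
  rw [hsplit]
  linear_combination (((m : K) - 2) * (z - 1) + 2) * h1 - (z - 1) * h2

namespace IsPrimitiveRoot

variable {ζ : K} {N : ℕ}

theorem geom_sum_pow_eq (hζ : IsPrimitiveRoot ζ N) (m : ℕ) :
    ∑ j ∈ range N, (ζ ^ m) ^ j = if N ∣ m then (N : K) else 0 := by
  split_ifs with h
  · obtain ⟨t, rfl⟩ := h
    simp [pow_mul, hζ.pow_eq_one]
  · refine geom_sum_eq_zero_of_pow_eq_one ?_ ((hζ.pow_eq_one_iff_dvd m).not.2 h)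
    rw [← pow_mul, mul_comm, pow_mul, hζ.pow_eq_one, one_pow]

theorem sum_pow_mul_sub_one_pow_eq_zero (hζ : IsPrimitiveRoot ζ N) {a b : ℕ} (ha : 0 < a)
    (hab : a + b < N) :
    ∑ j ∈ range N, (ζ ^ j) ^ a * (ζ ^ j - 1) ^ b = 0 := by
  have hexpand : ∀ j, (ζ ^ j) ^ a * (ζ ^ j - 1) ^ b
      = ∑ i ∈ range (b + 1), (-1) ^ (i + b) * (b.choose i : K) * (ζ ^ (a + i)) ^ j := by
    intro j
    rw [sub_pow, mul_sum]
    refine sum_congr rfl fun i _ => ?_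
    rw [one_pow, mul_one, ← pow_mul, ← pow_mul]
    ring
  simp only [hexpand]
  rw [sum_comm]
  refine sum_eq_zero fun i hi => ?_
  have hnd : ¬ N ∣ a + i := fun h =>
    absurd (Nat.le_of_dvd (by omega) h) (by rw [mem_range] at hi; omega)
  rw [← mul_sum, hζ.geom_sum_pow_eq, if_neg hnd, mul_zero]

theorem pow_half_eq_neg_one (hζ : IsPrimitiveRoot ζ (2 * N)) (hN : N ≠ 0) : ζ ^ N = -1 := by
  have h := hζ.pow_of_dvd hN (dvd_mul_left N 2)
  rw [Nat.mul_div_cancel _ (Nat.pos_of_ne_zero hN)] at h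
  exact h.eq_neg_one_of_two_right

end IsPrimitiveRoot

end RootsOfUnity

noncomputable def nodeRoot (n : ℕ) : ℂ := Complex.exp (2 * π * Complex.I / (2 * n : ℕ))

theorem isPrimitiveRoot_nodeRoot {n : ℕ} (hn : n ≠ 0) : IsPrimitiveRoot (nodeRoot n) (2 * n) :=
  Complex.isPrimitiveRoot_exp (2 * n) (by omega)

theorem ofReal_node_sub_one_mul (n j : ℕ) :
    ((node n j - 1 : ℝ) : ℂ) * (2 * nodeRoot n ^ j) = (nodeRoot n ^ j - 1) ^ 2 := by
  have hpow : nodeRoot n ^ j = Complex.exp ((j * π / n : ℝ) * Complex.I) := by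
    rw [nodeRoot, ← Complex.exp_nat_mul]
    push_cast
    ring_nf
  have hinv : nodeRoot n ^ j * Complex.exp (-((j * π / n : ℝ) * Complex.I)) = 1 := by
    rw [hpow, ← Complex.exp_add, add_neg_cancel, Complex.exp_zero]
  rw [node, Complex.ofReal_sub, Complex.ofReal_one, Complex.ofReal_cos, Complex.cos,
    neg_mul, ← hpow]
  linear_combination hinv

theorem nodeRoot_pow_ne_one {n j : ℕ} (hj0 : 0 < j) (hj : j < 2 * n) : nodeRoot n ^ j ≠ 1 :=
  fun h => absurd
    (Nat.le_of_dvd hj0 (((isPrimitiveRoot_nodeRoot (by omega)).pow_eq_one_iff_dvd j).1 h))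
    (by omega)

theorem node_ne_one {n j : ℕ} (hj0 : 0 < j) (hj : j < 2 * n) : node n j ≠ 1 := by
  intro h
  have h' := ofReal_node_sub_one_mul n j
  rw [h, sub_self, Complex.ofReal_zero, zero_mul, eq_comm, sq_eq_zero_iff, sub_eq_zero] at h'
  exact nodeRoot_pow_ne_one hj0 hj h'

theorem sum_range_neg_one_pow_mul_node_sub_one_pow {n k : ℕ} (hk : k < n) :
    ∑ j ∈ range (2 * n), (-1) ^ j * (node n j - 1) ^ k = 0 := by
  have hζ := isPrimitiveRoot_nodeRoot (n := n) (by omega)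
  have hterm : ∀ j, (((-1) ^ j * (node n j - 1) ^ k : ℝ) : ℂ) * 2 ^ k
      = (nodeRoot n ^ j) ^ (n - k) * (nodeRoot n ^ j - 1) ^ (2 * k) := by
    intro j
    have hsign : (-1 : ℂ) ^ j = (nodeRoot n ^ j) ^ (n - k) * (nodeRoot n ^ j) ^ k := by
      rw [← pow_add, Nat.sub_add_cancel hk.le, ← pow_mul, mul_comm, pow_mul,
        hζ.pow_half_eq_neg_one (by omega)]
    rw [Complex.ofReal_mul, Complex.ofReal_pow, Complex.ofReal_pow, Complex.ofReal_neg,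
      Complex.ofReal_one, pow_mul, ← ofReal_node_sub_one_mul, hsign]
    ring
  have hsum := hζ.sum_pow_mul_sub_one_pow_eq_zero (a := n - k) (b := 2 * k) (by omega) (by omega)
  simp only [← hterm, ← sum_mul] at hsum
  exact_mod_cast (mul_eq_zero.1 hsum).resolve_right (pow_ne_zero _ two_ne_zero)

theorem two_mul_neg_one_pow_mul_inv_node_sub_one {n j : ℕ} (hj0 : 0 < j) (hj : j < 2 * n) :
    (2 * n : ℂ) * ((-1) ^ j * ((node n j - 1 : ℝ) : ℂ)⁻¹)
      = ∑ k ∈ range (2 * n),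
          ((((2 * n : ℕ) : ℂ) - 2) * k - (k : ℂ) ^ 2) * (nodeRoot n ^ (n + 1 + k)) ^ j := by
  have hζ := isPrimitiveRoot_nodeRoot (n := n) (by omega)
  set ω := nodeRoot n ^ j with hω
  have hωN : ω ^ (2 * n) = 1 := by rw [← pow_mul, mul_comm, pow_mul, hζ.pow_eq_one, one_pow]
  have hkey := sum_mul_pow_mul_one_sub_sq_of_pow_eq_one hωN (nodeRoot_pow_ne_one hj0 hj)
  have hnode := ofReal_node_sub_one_mul n j
  have hne : ((node n j - 1 : ℝ) : ℂ) ≠ 0 :=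
    Complex.ofReal_ne_zero.2 (sub_ne_zero.2 (node_ne_one hj0 hj))
  have hsign : (-1 : ℂ) ^ j = ω ^ n := by
    rw [hω, ← pow_mul, mul_comm, pow_mul, hζ.pow_half_eq_neg_one (by omega)]
  have hshift : ∀ k, (nodeRoot n ^ (n + 1 + k)) ^ j = ω ^ (n + 1) * ω ^ k := fun k => by
    rw [← pow_mul, mul_comm, pow_mul, ← hω, pow_add]
  simp only [hshift, mul_left_comm _ (ω ^ (n + 1)), ← mul_sum]
  set S := ∑ k ∈ range (2 * n), ((((2 * n : ℕ) : ℂ) - 2) * k - (k : ℂ) ^ 2) * ω ^ k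
  rw [← hω] at hnode
  have h : ω ^ (n + 1) * S * ((node n j - 1 : ℝ) : ℂ) = 2 * n * ω ^ n := by
    push_cast at hkey
    linear_combination (ω ^ n / 2) * (S * hnode + hkey)
  rw [hsign, ← mul_assoc, ← div_eq_mul_inv, div_eq_iff hne, ← h]

theorem sum_Ico_neg_one_pow_mul_inv_node_sub_one {n : ℕ} (hn : 0 < n) :
    ∑ j ∈ Ico 1 (2 * n), (-1) ^ j * (node n j - 1)⁻¹ = (2 * n ^ 2 + 1) / 6 := by
  have hζ := isPrimitiveRoot_nodeRoot hn.ne'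
  have hinner : ∀ k ∈ range (2 * n), ∑ j ∈ Ico 1 (2 * n), (nodeRoot n ^ (n + 1 + k)) ^ j
      = (if k = n - 1 then (2 * n : ℂ) else 0) - 1 := by
    intro k hk
    have hdvd : 2 * n ∣ n + 1 + k ↔ k = n - 1 := by
      rw [mem_range] at hk
      constructor
      · rintro ⟨t, ht⟩
        rcases t with _ | _ | t
        · omega
        · omega
        · nlinarith
      · rintro rfl
        exact ⟨1, by omega⟩
    rw [eq_sub_iff_add_eq, add_comm, ← pow_zero (nodeRoot n ^ (n + 1 + k)),
      ← sum_range_eq_add_Ico _ (by omega)]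
    simp only [hζ.geom_sum_pow_eq, hdvd]
    push_cast
    rfl
  have hsum := sum_range_mul_sub_sq_mul_six (((2 * n : ℕ) : ℂ) - 2) (2 * n)
  have hn1 : ((n - 1 : ℕ) : ℂ) = n - 1 := by push_cast [Nat.cast_sub hn]; ring
  apply Complex.ofReal_injective
  apply mul_left_cancel₀ (show (2 * n : ℂ) ≠ 0 by norm_cast; omega)
  simp only [Complex.ofReal_sum, Complex.ofReal_mul, Complex.ofReal_pow, Complex.ofReal_inv,
    Complex.ofReal_neg, Complex.ofReal_one, mul_sum]
  rw [sum_congr rfl fun j hj => two_mul_neg_one_pow_mul_inv_node_sub_one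
    (mem_Ico.1 hj).1 (mem_Ico.1 hj).2]
  rw [sum_comm, sum_congr rfl fun k hk => by rw [← mul_sum, hinner k hk]]
  simp only [mul_sub, mul_ite, mul_zero, mul_one]
  rw [sum_sub_distrib, sum_ite_eq', if_pos (mem_range.2 (by omega)), hn1]
  push_cast at hsum ⊢
  linear_combination -(1/6 : ℂ) * hsum

theorem node_two_mul_sub {n j : ℕ} (hj : j ≤ 2 * n) : node n (2 * n - j) = node n j := by
  rcases eq_or_ne n 0 with rfl | hn
  · rw [show j = 0 by omega]
  have harg : ((2 * n - j : ℕ) : ℝ) * π / n = 2 * π - j * π / n := by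
    rw [Nat.cast_sub hj]
    field_simp
    push_cast
    ring
  rw [node, node, harg, cos_two_pi_sub]

theorem sum_Ico_one_two_mul_eq_of_symm {M : Type*} [AddCommMonoid M] {n : ℕ} (hn : 0 < n)
    {F : ℕ → M} (hF : ∀ j ≤ 2 * n, F (2 * n - j) = F j) :
    ∑ j ∈ Ico 1 (2 * n), F j = 2 • ∑ j ∈ Ico 1 n, F j + F n := by
  have hupper : ∑ j ∈ Ico (n + 1) (2 * n), F j = ∑ j ∈ Ico 1 n, F j := by
    have h := sum_Ico_reflect F 1 (m := n) (n := 2 * n) (by omega)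
    rw [show 2 * n + 1 - n = n + 1 by omega, show 2 * n + 1 - 1 = 2 * n by omega] at h
    rw [← h]
    exact sum_congr rfl fun j hj => hF j (by rw [mem_Ico] at hj; omega)
  rw [← sum_Ico_consecutive F (show 1 ≤ n by omega) (by omega),
    sum_eq_sum_Ico_succ_bot (by omega : n < 2 * n), hupper, two_nsmul]
  abel

noncomputable def matrixB (n i j : ℕ) : ℝ :=
  if j = 0 then (if i = 0 then 1 else 0) else (-1) ^ j * (node n j - 1) ^ i

noncomputable def vectorY (n j : ℕ) : ℝ :=
  if j = 0 then (2 * (n : ℝ) ^ 2 + 1) / 6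
  else if j = n then 1 / 2
  else ((Real.sin (j * π / (2 * n))) ^ 2)⁻¹

theorem vectorY_eq {n j : ℕ} (hj0 : 0 < j) :
    vectorY n j = -(if j = n then 1 else 2) * (node n j - 1)⁻¹ := by
  rw [vectorY, if_neg hj0.ne']
  split_ifs with h
  · rw [h, node_eq_neg_one (by omega)]
    norm_num
  · rw [sin_sq_eq_half_sub, mul_div_assoc', mul_div_mul_left _ _ two_ne_zero, ← node,
      show (1 / 2 - node n j / 2 : ℝ) = -(node n j - 1) / 2 by ring, inv_div, div_neg,
      div_eq_mul_inv]
    ring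

theorem sum_range_matrixB_mul_vectorY {n i : ℕ} (hn : 0 < n) (hi : i ≤ n) :
    ∑ j ∈ range (n + 1), matrixB n i j * vectorY n j = if i = 1 then 1 else 0 := by
  set F : ℕ → ℝ := fun j => (-1) ^ j * (node n j - 1) ^ i * (node n j - 1)⁻¹
  have hterm : ∀ j, 0 < j →
      matrixB n i j * vectorY n j = -((if j = n then 1 else 2) * F j) := fun j hj0 => by
    rw [matrixB, if_neg hj0.ne', vectorY_eq hj0]
    ring
  have hF : ∀ j ≤ 2 * n, F (2 * n - j) = F j := fun j hj => by
    simp only [F, node_two_mul_sub hj, neg_one_pow_eq_pow_mod_two (n := 2 * n - j),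
      neg_one_pow_eq_pow_mod_two (n := j), show (2 * n - j) % 2 = j % 2 by omega]
  have hfold : ∑ j ∈ range (n + 1), matrixB n i j * vectorY n j
      = matrixB n i 0 * vectorY n 0 - ∑ j ∈ Ico 1 (2 * n), F j := by
    rw [sum_Ico_one_two_mul_eq_of_symm hn hF, sum_range_succ, sum_range_eq_add_Ico _ hn,
      sum_congr rfl fun j hj => by
        rw [hterm j (mem_Ico.1 hj).1, if_neg (mem_Ico.1 hj).2.ne],
      hterm n hn, if_pos rfl, sum_neg_distrib, ← mul_sum, two_nsmul]
    ring
  rw [hfold]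
  rcases i with _ | k
  · simp only [F, pow_zero, mul_one, sum_Ico_neg_one_pow_mul_inv_node_sub_one hn]
    simp [matrixB, vectorY]
  · have hsum : ∑ j ∈ Ico 1 (2 * n), F j = -0 ^ k := by
      rw [sum_congr rfl (g := fun j => (-1) ^ j * (node n j - 1) ^ k) fun j hj => by
        simp only [F, pow_succ, mul_assoc, mul_inv_cancel₀ (sub_ne_zero.2 (node_ne_one
          (mem_Ico.1 hj).1 (mem_Ico.1 hj).2)), mul_one]]
      have h := sum_range_neg_one_pow_mul_node_sub_one_pow (n := n) (k := k) (by omega)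
      rw [sum_range_eq_add_Ico _ (by omega), node_eq_one] at h
      linear_combination h
    rw [hsum]
    rcases k with _ | k <;> simp [matrixB]

theorem det_of_matrixB_ne_zero (n : ℕ) :
    (Matrix.of fun i j : Fin (n + 1) => matrixB n i j).det ≠ 0 := by
  set A := Matrix.of fun i j : Fin (n + 1) => matrixB n i j
  set v : Fin n → ℝ := fun j => node n (j + 1) - 1
  set d : Fin n → ℝ := fun j => (-1) ^ ((j : ℕ) + 1) * (node n (j + 1) - 1)
  have hminor : A.det = (A.submatrix Fin.succ Fin.succ).det := by
    rw [Matrix.det_succ_column_zero, sum_eq_single (0 : Fin (n + 1))]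
    · simp [A, matrixB]
    · intro i _ hi
      simp [A, matrixB, hi]
    · simp
  have hfactor : A.submatrix Fin.succ Fin.succ = (Matrix.vandermonde v)ᵀ * Matrix.diagonal d := by
    ext i j
    simp only [A, Matrix.mul_diagonal, Matrix.submatrix_apply, Matrix.of_apply, matrixB,
      Fin.val_succ, Matrix.transpose_apply, Matrix.vandermonde_apply, v, d]
    rw [if_neg (by omega), pow_succ]
    ring
  have hv : Function.Injective v := StrictAnti.injective fun a b hab => by
    simpa [v] using node_lt (Nat.succ_le_of_lt b.isLt) (Nat.succ_lt_succ hab)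
  have hd : ∀ j, d j ≠ 0 := fun j =>
    mul_ne_zero (pow_ne_zero _ (by norm_num)) (sub_ne_zero.2 (node_ne_one (by omega) (by omega)))
  rw [hminor, hfactor, Matrix.det_mul, Matrix.det_transpose, Matrix.det_diagonal]
  exact mul_ne_zero (Matrix.det_vandermonde_ne_zero_iff.2 hv) (prod_ne_zero_iff.2 fun j _ => hd j)

theorem stmt13 (n : ℕ) (hn : 1 ≤ n)
    (B : Matrix (Fin (n + 1)) (Fin (n + 1)) ℝ)
    (hB : ∀ i j : Fin (n + 1),
      B i j = if (j : ℕ) = 0 then (if (i : ℕ) = 0 then 1 else 0)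
        else (-1) ^ (j : ℕ) * (Real.cos ((j : ℕ) * Real.pi / n) - 1) ^ (i : ℕ))
    (y : Fin (n + 1) → ℝ)
    (hy : ∀ j : Fin (n + 1),
      y j = if (j : ℕ) = 0 then (2 * (n : ℝ) ^ 2 + 1) / 6
        else if (j : ℕ) = n then 1 / 2
        else ((Real.sin ((j : ℕ) * Real.pi / (2 * n))) ^ 2)⁻¹)
    (e1 : Fin (n + 1) → ℝ)
    (he1 : ∀ i : Fin (n + 1), e1 i = if (i : ℕ) = 1 then 1 else 0) :
    B.mulVec y = e1 ∧ ∀ y' : Fin (n + 1) → ℝ, B.mulVec y' = e1 → y' = y := by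
  have hB' : B = Matrix.of fun i j : Fin (n + 1) => matrixB n i j := Matrix.ext hB
  have hy' : y = fun j : Fin (n + 1) => vectorY n j := funext hy
  have hsol : B.mulVec y = e1 := funext fun i => by
    rw [he1, hB', hy']
    exact (Fin.sum_univ_eq_sum_range (fun j => matrixB n i j * vectorY n j) _).trans
      (sum_range_matrixB_mul_vectorY hn i.is_le)
  have hinj : Function.Injective B.mulVec := Matrix.mulVec_injective_iff_isUnit.2 <|
    (Matrix.isUnit_iff_isUnit_det B).2 (hB' ▸ (det_of_matrixB_ne_zero n).isUnit)
  exact ⟨hsol, fun y' h => hinj (h.trans hsol.symm)⟩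
end

section
/- Let p be a real polynomial of degree at most n with sup_{x ∈ [−1,1]} |p(x)| ≤ 1. Then p'(1) ≤ n². -/
open Polynomial Polynomial.Chebyshev Real Finset

lemma chebT_degree_le (m : ℕ) : (T ℝ m).degree ≤ m := by
  induction m using Nat.twoStepInduction with
  | zero => simpa using degree_one_le
  | one => simp [T_one, degree_X_le]
  | more k ih1 ih2 =>
    have h : T ℝ ((k + 2 : ℕ) : ℤ) = 2 * X * T ℝ (k + 1 : ℕ) - T ℝ (k : ℕ) := by
      push_cast
      exact T_add_two ℝ k
    rw [h]
    refine (degree_sub_le _ _).trans ?_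
    simp only [sup_le_iff]
    constructor
    · refine (degree_mul_le _ _).trans ?_
      have h2 : ((2 : ℝ[X]) * X).degree ≤ 1 := by
        have : ((2 : ℝ[X]) * X) = C 2 * X := by rw [map_ofNat]
        rw [this, degree_C_mul_X (by norm_num)]
      calc ((2 : ℝ[X]) * X).degree + (T ℝ ((k+1:ℕ) : ℤ)).degree
            ≤ (1 : WithBot ℕ) + ((k+1 : ℕ) : WithBot ℕ) := add_le_add h2 ih2
        _ ≤ ((k+2 : ℕ) : WithBot ℕ) := by
            norm_cast
            omega
    · exact ih1.trans (by exact_mod_cast (show k ≤ k+2 by omega))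

lemma chebU_eval_one (m : ℕ) : (U ℝ m).eval 1 = m + 1 := by
  induction m using Nat.twoStepInduction with
  | zero => simp [U_zero]
  | one => norm_num [U_one]
  | more k ih1 ih2 =>
    have h : U ℝ ((k + 2 : ℕ) : ℤ) = 2 * X * U ℝ (k + 1 : ℕ) - U ℝ (k : ℕ) := by
      push_cast
      exact U_add_two ℝ k
    rw [h]
    simp only [eval_sub, eval_mul, eval_ofNat, eval_X, ih1, ih2]
    push_cast
    ring

lemma chebT_deriv_one (m : ℕ) (hm : 1 ≤ m) : (Polynomial.derivative (T ℝ m)).eval 1 = (m:ℝ)^2 := by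
  have h := T_derivative_eq_U (R := ℝ) m
  rw [h]
  have : ((m : ℤ) - 1) = ((m - 1 : ℕ) : ℤ) := by omega
  rw [this]
  simp only [eval_mul, eval_intCast, chebU_eval_one]
  have : ((m - 1 : ℕ) : ℝ) = (m : ℝ) - 1 := by
    have := Nat.cast_sub (R := ℝ) hm
    simpa using this
  rw [this]
  push_cast
  ring

theorem stmt14 (n : ℕ) (p : Polynomial ℝ) (hdeg : p.natDegree ≤ n)
    (hbound : ∀ x ∈ Set.Icc (-1 : ℝ) 1, |p.eval x| ≤ 1) :
    p.derivative.eval 1 ≤ (n : ℝ) ^ 2 := by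
  rcases Nat.eq_zero_or_pos n with hn | hn
  · subst hn
    rw [Polynomial.eq_C_of_natDegree_le_zero hdeg]
    simp
  set s : Finset ℕ := Finset.range (n + 1) with hs
  set v : ℕ → ℝ := fun k => Real.cos (k * π / n) with hv
  have hnR : (0 : ℝ) < n := by exact_mod_cast hn
  have hmem : ∀ k ∈ s, (k : ℝ) * π / n ∈ Set.Icc 0 π := by
    intro k hk
    have hkn : k ≤ n := by simpa [hs, Nat.lt_succ_iff] using hk
    constructor
    · positivity
    · rw [div_le_iff₀ hnR]
      have : (k : ℝ) ≤ n := by exact_mod_cast hkn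
      nlinarith [Real.pi_pos]
  have hanti : ∀ j ∈ s, ∀ k ∈ s, j < k → v k < v j := by
    intro j hj k hk hjk
    refine Real.strictAntiOn_cos (hmem j hj) (hmem k hk) ?_
    have : (j : ℝ) < k := by exact_mod_cast hjk
    have hπ := Real.pi_pos
    rw [div_lt_div_iff₀ hnR hnR]
    nlinarith [mul_pos (mul_pos (sub_pos.mpr this) hπ) hnR]
  have hvs : Set.InjOn v s := by
    intro a ha b hb hab
    rcases lt_trichotomy a b with h | h | h
    · exact absurd hab (ne_of_gt (hanti a ha b hb h))
    · exact h
    · exact absurd hab (ne_of_lt (hanti b hb a ha h))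
  have hvle : ∀ j, v j ≤ 1 := fun j => Real.cos_le_one _
  have hvge : ∀ j, -1 ≤ v j := fun j => Real.neg_one_le_cos _
  have hcard : s.card = n + 1 := Finset.card_range _
  have hdegp : p.degree < (s.card : ℕ) := by
    rw [hcard]
    calc p.degree ≤ (p.natDegree : WithBot ℕ) := Polynomial.degree_le_natDegree
      _ < ((n + 1 : ℕ) : WithBot ℕ) := by exact_mod_cast Nat.lt_succ_of_le hdeg
  have hp := Lagrange.eq_interpolate hvs hdegp
  have hTdeg : (Polynomial.Chebyshev.T ℝ n).degree < (s.card : ℕ) := by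
    rw [hcard]
    exact lt_of_le_of_lt (chebT_degree_le n)
      (by exact_mod_cast Nat.lt_succ_of_le (le_refl n))
  have hTeval : ∀ k ∈ s, (Polynomial.Chebyshev.T ℝ n).eval (v k) = (-1 : ℝ) ^ k := by
    intro k hk
    have h1 : v k = Real.cos ((k : ℝ) * π / n) := rfl
    rw [h1, Polynomial.Chebyshev.T_real_cos]
    have h2 : ((n : ℤ) : ℝ) * ((k : ℝ) * π / n) = (k : ℝ) * π := by
      push_cast
      field_simp
    rw [h2]
    simpa using Real.cos_nat_mul_pi_sub 0 k
  have hT := Lagrange.eq_interpolate_of_eval_eq (r := fun k => (-1:ℝ)^k) hvs hTdeg hTeval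
  have hsum : ∀ r : ℕ → ℝ, (Polynomial.derivative (Lagrange.interpolate s v r)).eval 1
      = ∑ k ∈ s, r k * (Polynomial.derivative (Lagrange.basis s v k)).eval 1 := by
    intro r
    simp [Lagrange.interpolate_apply, Polynomial.derivative_sum, Polynomial.derivative_C_mul,
      Polynomial.eval_finset_sum]
  have hkey : ∀ k ∈ s, 0 ≤ (-1 : ℝ) ^ k * (Polynomial.derivative (Lagrange.basis s v k)).eval 1 := by
    intro k hk
    have hbasis : Lagrange.basis s v k
        = Polynomial.C (Lagrange.nodalWeight s v k) * Lagrange.nodal (s.erase k) v := by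
      rw [Lagrange.basis_eq_prod_sub_inv_mul_nodal_div hk, Lagrange.nodal_erase_eq_nodal_div hk]
    rw [hbasis, Polynomial.derivative_C_mul, Polynomial.eval_mul, Polynomial.eval_C]
    have hd2 : 0 ≤ (Polynomial.derivative (Lagrange.nodal (s.erase k) v)).eval 1 := by
      rw [Lagrange.derivative_nodal, Polynomial.eval_finset_sum]
      refine Finset.sum_nonneg fun i _ => ?_
      rw [Lagrange.eval_nodal]
      refine Finset.prod_nonneg fun j _ => ?_
      linarith [hvle j]
    have hw : 0 ≤ (-1 : ℝ) ^ k * Lagrange.nodalWeight s v k := by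
      unfold Lagrange.nodalWeight
      have hfilter : (s.erase k).filter (· < k) = Finset.range k := by
        ext j
        simp only [Finset.mem_filter, Finset.mem_erase, Finset.mem_range, hs]
        have : k < n + 1 := by simpa [hs] using hk
        omega
      have hsign : (-1 : ℝ) ^ k = ∏ j ∈ s.erase k, (if j < k then (-1 : ℝ) else 1) := by
        rw [Finset.prod_ite, Finset.prod_const, Finset.prod_const_one, mul_one, hfilter,
          Finset.card_range]
      rw [hsign, ← Finset.prod_mul_distrib]
      refine Finset.prod_nonneg fun j hj => ?_
      rcases Finset.mem_erase.mp hj with ⟨hjk, hjs⟩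
      by_cases hlt : j < k
      · simp only [if_pos hlt]
        have h1 : v k < v j := hanti j hjs k hk hlt
        have h2 : (v k - v j)⁻¹ ≤ 0 := inv_nonpos.mpr (by linarith)
        linarith
      · have hgt : k < j := by omega
        have h1 : v j < v k := hanti k hk j hjs hgt
        simp only [if_neg hlt, one_mul]
        exact inv_nonneg.mpr (by linarith)
    calc (0:ℝ) ≤ ((-1 : ℝ) ^ k * Lagrange.nodalWeight s v k)
          * (Polynomial.derivative (Lagrange.nodal (s.erase k) v)).eval 1 := mul_nonneg hw hd2
      _ = (-1 : ℝ) ^ k * (Lagrange.nodalWeight s v k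
          * (Polynomial.derivative (Lagrange.nodal (s.erase k) v)).eval 1) := by ring
  have hfin : (Polynomial.derivative p).eval 1
      ≤ (Polynomial.derivative (Polynomial.Chebyshev.T ℝ n)).eval 1 := by
    conv_lhs => rw [hp]
    conv_rhs => rw [hT]
    rw [hsum, hsum]
    refine Finset.sum_le_sum fun k hk => ?_
    set d := (Polynomial.derivative (Lagrange.basis s v k)).eval 1 with hd
    have h1 : |p.eval (v k)| ≤ 1 := hbound (v k) ⟨hvge k, hvle k⟩
    have h2 : (-1 : ℝ) ^ k * d = |d| := by
      rcases Nat.even_or_odd k with he | ho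
      · rw [he.neg_one_pow, one_mul, abs_of_nonneg]
        have := hkey k hk
        rwa [he.neg_one_pow, one_mul] at this
      · rw [ho.neg_one_pow, neg_one_mul, abs_of_nonpos]
        have := hkey k hk
        rw [ho.neg_one_pow, neg_one_mul] at this
        linarith
    calc p.eval (v k) * d ≤ |p.eval (v k) * d| := le_abs_self _
      _ = |p.eval (v k)| * |d| := abs_mul _ _
      _ ≤ 1 * |d| := mul_le_mul_of_nonneg_right h1 (abs_nonneg _)
      _ = (-1 : ℝ) ^ k * d := by rw [one_mul, h2]
  calc (Polynomial.derivative p).eval 1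
      ≤ (Polynomial.derivative (Polynomial.Chebyshev.T ℝ n)).eval 1 := hfin
    _ = (n : ℝ) ^ 2 := chebT_deriv_one n hn
end

section
/- Let p be a real polynomial of degree at most n. Then for every x₀ ∈ [−1, 1] with x₀ ≠ 0, |p'(x₀)| ≤ (n²/|x₀|) · ‖p‖_{[-1,1]}. -/
/-!
Substituting `q x = p (x₀ x)` gives `q' 1 = x₀ p' x₀` and `‖q‖_{[-1,1]} ≤ ‖p‖_{[-1,1]}`, so the
claim follows from Markov's inequality `|q' 1| ≤ n² ‖q‖_{[-1,1]}` at the endpoint. That is the case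
`k = 1` of the extremality of the Chebyshev polynomial `T n` for derivatives at `1`, with
`(T n)' 1 = n²`.
-/

open Polynomial Set

namespace Polynomial

theorem derivative_eval_one_le_of_forall_abs_le {n : ℕ} {q : ℝ[X]} (hq : q.natDegree ≤ n)
    {M : ℝ} (hM : 0 < M) (hqM : ∀ x ∈ Icc (-1 : ℝ) 1, |q.eval x| ≤ M) :
    q.derivative.eval 1 ≤ n ^ 2 * M := by
  have hnorm : ∀ x ∈ Icc (-1 : ℝ) 1, |(C M⁻¹ * q).eval x| ≤ 1 := fun x hx => by
    rw [eval_mul, eval_C, abs_mul, abs_inv, abs_of_pos hM, inv_mul_le_one₀ hM]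
    exact hqM x hx
  have hT := Chebyshev.eval_iterate_derivative_le_of_forall_abs_le_one (k := 1) le_rfl
    (natDegree_le_iff_degree_le.mp (natDegree_C_mul_le _ _ |>.trans hq)) hnorm
  simp only [Function.iterate_one, derivative_C_mul, eval_mul, eval_C,
    Chebyshev.derivative_T_eval_one] at hT
  rwa [inv_mul_le_iff₀ hM, Int.cast_natCast, mul_comm] at hT

theorem abs_derivative_eval_one_le_of_forall_abs_le {n : ℕ} {q : ℝ[X]} (hq : q.natDegree ≤ n)
    {M : ℝ} (hqM : ∀ x ∈ Icc (-1 : ℝ) 1, |q.eval x| ≤ M) :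
    |q.derivative.eval 1| ≤ n ^ 2 * M := by
  obtain hM | hM := ((abs_nonneg _).trans (hqM 0 (by norm_num))).eq_or_lt
  · have hq0 : q = 0 := q.eq_zero_of_infinite_isRoot <|
      (Icc_infinite (by norm_num : (-1 : ℝ) < 1)).mono fun x hx => abs_nonpos_iff.mp (hM ▸ hqM x hx)
    subst hM
    simp [hq0]
  rw [abs_le, neg_le]
  refine ⟨?_, derivative_eval_one_le_of_forall_abs_le hq hM hqM⟩
  simpa using derivative_eval_one_le_of_forall_abs_le (q := -q) (by rwa [natDegree_neg]) hM
    (by simpa using hqM)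

theorem derivative_comp_C_mul_X_eval_one (p : ℝ[X]) (a : ℝ) :
    (p.comp (C a * X)).derivative.eval 1 = a * p.derivative.eval a := by
  simp [derivative_comp]

end Polynomial

theorem mul_mem_Icc_neg_one_one {a b : ℝ} (ha : a ∈ Icc (-1 : ℝ) 1) (hb : b ∈ Icc (-1 : ℝ) 1) :
    a * b ∈ Icc (-1 : ℝ) 1 := by
  rw [mem_Icc, ← abs_le, abs_mul] at *
  exact mul_le_one₀ ha (abs_nonneg b) hb

theorem stmt15 (n : ℕ) (p : Polynomial ℝ) (hdeg : p.natDegree ≤ n)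
    (x₀ : ℝ) (hx₀ : x₀ ∈ Set.Icc (-1 : ℝ) 1) (hx₀0 : x₀ ≠ 0) :
    |p.derivative.eval x₀| ≤
      (n : ℝ) ^ 2 / |x₀| * sSup ((fun x => |p.eval x|) '' Set.Icc (-1 : ℝ) 1) := by
  set M := sSup ((fun x => |p.eval x|) '' Icc (-1 : ℝ) 1)
  have hpM : ∀ x ∈ Icc (-1 : ℝ) 1, |p.eval x| ≤ M := fun x hx =>
    le_csSup (isCompact_Icc.bddAbove_image p.continuous.abs.continuousOn) ⟨x, hx, rfl⟩
  have hqM : ∀ x ∈ Icc (-1 : ℝ) 1, |(p.comp (C x₀ * X)).eval x| ≤ M := fun x hx => by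
    simpa using hpM _ (mul_mem_Icc_neg_one_one hx₀ hx)
  have hq : (p.comp (C x₀ * X)).natDegree ≤ n :=
    natDegree_comp_le.trans (by rwa [natDegree_C_mul_X x₀ hx₀0, mul_one])
  have hmarkov := abs_derivative_eval_one_le_of_forall_abs_le hq hqM
  rw [derivative_comp_C_mul_X_eval_one, abs_mul] at hmarkov
  rw [div_mul_eq_mul_div, le_div_iff₀ (abs_pos.mpr hx₀0)]
  linarith
end

section
/- Let n be a positive integer, let k be a natural number, and let p be a real polynomial of degree at most n with |p(x)| ≤ 1 for all x ∈ [−1, 1]. Then p^{(k)}(1) ≤ T_n^{(k)}(1), where T_n is the n-th Chebyshev polynomial of the first kind and the superscript (k) denotes the k-th derivative. -/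
theorem stmt17_general (n : ℕ) (k : ℕ) (p : Polynomial ℝ)
    (hdeg : p.natDegree ≤ n)
    (hbound : ∀ x ∈ Set.Icc (-1 : ℝ) 1, |p.eval x| ≤ 1) :
    (Polynomial.derivative^[k] p).eval 1 ≤
      (Polynomial.derivative^[k] (Polynomial.Chebyshev.T ℝ n)).eval 1 :=
  Polynomial.Chebyshev.eval_iterate_derivative_le_of_forall_abs_le_one le_rfl
    (Polynomial.degree_le_of_natDegree_le hdeg) hbound

theorem stmt17 (n : ℕ) (hn : 1 ≤ n) (k : ℕ) (p : Polynomial ℝ)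
    (hdeg : p.natDegree ≤ n)
    (hbound : ∀ x ∈ Set.Icc (-1 : ℝ) 1, |p.eval x| ≤ 1) :
    (Polynomial.derivative^[k] p).eval 1 ≤
      (Polynomial.derivative^[k] (Polynomial.Chebyshev.T ℝ n)).eval 1 :=
  stmt17_general n k p hdeg hbound
end

section
/- Let i and n be odd natural numbers with i < n. Then Σ_{j=0}^{n} (−1)^j · (cos(jπ/n))^i = 1. -/
/-!
Let `ζ = e^{iπ/n}`, a primitive `2n`-th root of unity, so that `2 cos (jπ/n) = ζ^j + ζ^{-j}` and
`(-1)^j = ζ^{nj}`. Expanding binomially,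
`(-1)^j (2 cos (jπ/n))^i = ∑_t C(i,t) (ζ^{n-i+2t})^j`. As `n - i` is even and
`0 < n - i + 2t < 2n`, each `ζ^{n-i+2t}` is an `n`-th root of unity other than `1`, so its
geometric sum over `j = 0, …, n` is `1`; what remains is `∑_t C(i,t) = 2^i`.
-/

open Finset

section RootsOfUnity

variable {K : Type*} [Field K]

theorem sum_range_succ_pow_eq_one {w : K} {n : ℕ} (hwn : w ^ n = 1) (hw : w ≠ 1) :
    ∑ j ∈ range (n + 1), w ^ j = 1 := by
  rw [sum_range_succ, geom_sum_eq hw, hwn, sub_self, zero_div, zero_add]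

theorem add_inv_pow_mul_pow {u : K} (hu : u ≠ 0) (i : ℕ) :
    (u + u⁻¹) ^ i * u ^ i = ∑ t ∈ range (i + 1), (i.choose t : K) * (u ^ 2) ^ t := by
  have hmul : (u + u⁻¹) * u = u ^ 2 + 1 := by field_simp
  rw [← mul_pow, hmul, add_pow]
  simp only [one_pow, mul_one]
  exact sum_congr rfl fun t _ => mul_comm _ _

theorem neg_one_pow_mul_add_inv_pow {ζ : K} (hζ : ζ ≠ 0) {d i : ℕ} (hζn : ζ ^ (d + i) = -1)
    (j : ℕ) :
    (-1) ^ j * (ζ ^ j + (ζ ^ j)⁻¹) ^ i =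
      ∑ t ∈ range (i + 1), (i.choose t : K) * (ζ ^ (d + 2 * t)) ^ j := by
  have hsign : (-1 : K) ^ j = ζ ^ (d * j) * (ζ ^ j) ^ i := by
    rw [← hζn, ← pow_mul, ← pow_mul, ← pow_add]
    ring_nf
  rw [hsign, mul_assoc, mul_comm ((ζ ^ j) ^ i), add_inv_pow_mul_pow (pow_ne_zero j hζ), mul_sum]
  refine sum_congr rfl fun t _ => ?_
  rw [← pow_mul, ← pow_mul, ← pow_mul, mul_left_comm, ← pow_add]
  ring_nf

theorem IsPrimitiveRoot.pow_eq_neg_one {ζ : K} {n : ℕ} (hζ : IsPrimitiveRoot ζ (2 * n))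
    (hn : n ≠ 0) : ζ ^ n = -1 := by
  have h := hζ.pow_of_dvd hn (dvd_mul_left n 2)
  rw [Nat.mul_div_cancel _ (Nat.pos_of_ne_zero hn)] at h
  exact h.eq_neg_one_of_two_right

theorem IsPrimitiveRoot.sum_neg_one_pow_mul_add_inv_pow {ζ : K} {n i : ℕ}
    (hζ : IsPrimitiveRoot ζ (2 * n)) (hlt : i < n) (hpar : Even (n - i)) :
    ∑ j ∈ range (n + 1), (-1) ^ j * (ζ ^ j + (ζ ^ j)⁻¹) ^ i = 2 ^ i := by
  obtain ⟨d, rfl⟩ : ∃ d, n = d + i := ⟨n - i, by omega⟩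
  rw [Nat.add_sub_cancel] at hpar
  have hζn := hζ.pow_eq_neg_one (by omega)
  have hgeom : ∀ t ∈ range (i + 1), ∑ j ∈ range (d + i + 1), (ζ ^ (d + 2 * t)) ^ j = 1 := by
    intro t ht
    have hti : t < i + 1 := mem_range.mp ht
    refine sum_range_succ_pow_eq_one ?_ ?_
    · rw [← pow_mul, mul_comm, pow_mul, hζn]
      exact (hpar.add (even_two_mul t)).neg_one_pow
    · exact hζ.pow_ne_one_of_pos_of_lt (by omega) (by omega)
  calc ∑ j ∈ range (d + i + 1), (-1) ^ j * (ζ ^ j + (ζ ^ j)⁻¹) ^ i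
      = ∑ t ∈ range (i + 1),
          (i.choose t : K) * ∑ j ∈ range (d + i + 1), (ζ ^ (d + 2 * t)) ^ j := by
        simp_rw [neg_one_pow_mul_add_inv_pow (hζ.ne_zero (by omega)) hζn, mul_sum]
        exact sum_comm
    _ = ∑ t ∈ range (i + 1), (i.choose t : K) :=
        sum_congr rfl fun t ht => by rw [hgeom t ht, mul_one]
    _ = 2 ^ i := by rw [← Nat.cast_sum, Nat.sum_range_choose, Nat.cast_pow, Nat.cast_ofNat]

end RootsOfUnity

theorem stmt18 (i n : ℕ) (hi : Odd i) (hn : Odd n) (hlt : i < n) :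
    ∑ j ∈ Finset.range (n + 1),
      (-1 : ℝ) ^ j * (Real.cos (j * Real.pi / n)) ^ i = 1 := by
  set ζ := Complex.exp (2 * Real.pi * Complex.I / (2 * n : ℕ))
  have hζ : IsPrimitiveRoot ζ (2 * n) := Complex.isPrimitiveRoot_exp _ (by omega)
  have htwo_cos (j : ℕ) : ((2 * Real.cos (j * Real.pi / n) : ℝ) : ℂ) = ζ ^ j + (ζ ^ j)⁻¹ := by
    rw [← Complex.exp_nat_mul, ← Complex.exp_neg]
    push_cast
    rw [Complex.two_cos]
    congr 2 <;> field_simp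
  have h2cos :
      ∑ j ∈ range (n + 1), (-1 : ℝ) ^ j * (2 * Real.cos (j * Real.pi / n)) ^ i = 2 ^ i := by
    have key := hζ.sum_neg_one_pow_mul_add_inv_pow hlt (Nat.Odd.sub_odd hn hi)
    simp_rw [← htwo_cos] at key
    exact_mod_cast key
  simp_rw [mul_pow, mul_left_comm _ ((2 : ℝ) ^ i), ← mul_sum] at h2cos
  exact (mul_eq_left₀ (pow_ne_zero i two_ne_zero)).mp h2cos
end

section
/- Let i and n be natural numbers with 1 ≤ i and 2i < n. Then Σ_{j=0}^{n} (−1)^j · (sin(jπ/(2n)))^{2i} = (1/2)·(−1)^n. -/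
open Finset Complex

lemma cos_alt_sum (m n : ℕ) (hmn : m < n) :
    ∑ j ∈ Finset.range (n + 1), (-1 : ℝ) ^ j * Real.cos (↑m * ↑j * Real.pi / ↑n) =
      (1 + (-1 : ℝ) ^ (n + m)) / 2 := by
  have hn0 : 0 < n := Nat.pos_of_ne_zero (by omega)
  have hnR : (0:ℝ) < n := by exact_mod_cast hn0
  set φ : ℝ := ↑m * Real.pi / ↑n with hφ
  have hφ0 : 0 ≤ φ := div_nonneg (mul_nonneg (by positivity) Real.pi_pos.le) hnR.le
  have hφπ : φ < Real.pi := by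
    rw [hφ, div_lt_iff₀ hnR]
    have : (m:ℝ) < n := by exact_mod_cast hmn
    nlinarith [Real.pi_pos]
  set u : ℂ := Complex.exp (↑φ * I) with hu
  have hune : u ≠ -1 := by
    intro h
    have hre : u.re = Real.cos φ := Complex.exp_ofReal_mul_I_re φ
    rw [h] at hre
    have : Real.cos Real.pi < Real.cos φ := by
      rcases eq_or_lt_of_le hφ0 with h0 | h0
      · rw [← h0]; simpa [Real.cos_pi] using (by norm_num : (-1:ℝ) < 1)
      · exact Real.cos_lt_cos_of_nonneg_of_le_pi hφ0 le_rfl hφπ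
    rw [Real.cos_pi, ← hre] at this
    simp at this
  have hu0 : u ≠ 0 := Complex.exp_ne_zero _
  have hden : -u - 1 ≠ 0 := fun h => hune (by linear_combination -h)
  have hxne : (-u) ≠ 1 := fun h => hune (by linear_combination -h)
  have hterm : ∀ j : ℕ, ((-u) ^ j).re = (-1 : ℝ) ^ j * Real.cos (↑m * ↑j * Real.pi / ↑n) := by
    intro j
    have h1 : (-u) ^ j = (↑((-1:ℝ)^j) : ℂ) * Complex.exp (↑(j * φ) * I) := by
      rw [neg_pow, hu, ← Complex.exp_nat_mul]
      congr 1
      · push_cast; ring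
      · congr 1; push_cast; ring
    rw [h1, Complex.re_ofReal_mul, Complex.exp_ofReal_mul_I_re]
    have h2 : j * φ = ↑m * ↑j * Real.pi / ↑n := by rw [hφ]; ring
    rw [h2]
  have hgeom : ∑ j ∈ Finset.range (n + 1), (-u) ^ j = ((-u) ^ (n+1) - 1) / (-u - 1) :=
    geom_sum_eq hxne (n + 1)
  have hupow : u ^ n = ((-1:ℂ)) ^ m := by
    rw [hu, ← Complex.exp_nat_mul]
    have : (↑n : ℂ) * (↑φ * I) = ↑m * (↑Real.pi * I) := by
      have hnC : (n:ℂ) ≠ 0 := Nat.cast_ne_zero.mpr (by omega)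
      rw [hφ]; push_cast; field_simp
    rw [this, Complex.exp_nat_mul, Complex.exp_pi_mul_I]
  have hxpow : (-u) ^ (n + 1) = (-1:ℂ)^(n+m+1) * u := by
    have h1 : (-u)^(n+1) = (-1:ℂ)^(n+1) * (u^n * u) := by rw [neg_pow, pow_succ u]
    rw [h1, hupow, pow_add, pow_add, pow_add]; ring
  have hconj : (starRingEnd ℂ) u = u⁻¹ := by
    rw [hu, ← Complex.exp_conj, ← Complex.exp_neg]
    congr 1
    simp [Complex.conj_I]
  calc ∑ j ∈ Finset.range (n + 1), (-1 : ℝ) ^ j * Real.cos (↑m * ↑j * Real.pi / ↑n)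
      = (∑ j ∈ Finset.range (n+1), (-u)^j).re := by
        rw [Complex.re_sum]
        exact (Finset.sum_congr rfl fun j _ => (hterm j).symm)
    _ = (((-1:ℂ)^(n+m+1) * u - 1)/(-u-1)).re := by rw [hgeom, hxpow]
    _ = (1 + (-1 : ℝ) ^ (n + m)) / 2 := by
        rcases Nat.even_or_odd (n + m) with he | ho
        · have h1 : (-1:ℂ)^(n+m+1) = -1 := by
            rw [pow_succ, he.neg_one_pow]; ring
          have h2 : (-1:ℝ)^(n+m) = 1 := he.neg_one_pow
          rw [h1, h2]
          have : ((-1:ℂ)) * u - 1 = -u - 1 := by ring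
          rw [this, div_self hden]
          norm_num
        · have h1 : (-1:ℂ)^(n+m+1) = 1 := by
            rw [pow_succ, ho.neg_one_pow]; ring
          have h2 : (-1:ℝ)^(n+m) = -1 := ho.neg_one_pow
          rw [h1, h2, one_mul]
          set z : ℂ := (u - 1)/(-u - 1) with hz
          have hcz : (starRingEnd ℂ) z = -z := by
            rw [hz, map_div₀]
            simp only [map_sub, map_neg, map_one, hconj]
            rw [show u⁻¹ - 1 = u⁻¹ * (1 - u) by field_simp,
                show -u⁻¹ - 1 = u⁻¹ * (-u - 1) by field_simp; ring,
                mul_div_mul_left _ _ (inv_ne_zero hu0),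
                show (1:ℂ) - u = -(u - 1) by ring, neg_div]
          have : z + (starRingEnd ℂ) z = 0 := by rw [hcz]; ring
          rw [Complex.add_conj] at this
          have hre : z.re = 0 := by
            have := congrArg Complex.re this
            simpa using this
          rw [hre]
          norm_num

lemma sin_pow_expand (i : ℕ) (θ : ℝ) :
    (-4 : ℝ) ^ i * Real.sin θ ^ (2 * i) =
      ∑ k ∈ Finset.range (2 * i + 1),
        (-1 : ℝ) ^ k * ((2 * i).choose k : ℝ) * Real.cos ((2 * (k:ℝ) - 2 * i) * θ) := by
  set a : ℂ := Complex.exp (↑θ * I) with ha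
  set b : ℂ := Complex.exp (-↑θ * I) with hb
  have hab : a - b = 2 * I * Complex.sin ↑θ := by
    rw [Complex.sin]
    have hI : I * I = -1 := Complex.I_mul_I
    linear_combination (a - b) * hI
  have hI2 : ((2:ℂ) * I)^2 = -4 := by
    rw [mul_pow, Complex.I_sq]; norm_num
  have h2 : (a - b)^(2*i) = (-4:ℂ)^i * (Complex.sin ↑θ)^(2*i) := by
    rw [hab, mul_pow]
    congr 1
    rw [pow_mul, hI2]
  have key : ((-4 : ℂ) ^ i * (Complex.sin ↑θ) ^ (2*i)) =
      ∑ k ∈ Finset.range (2*i+1), (↑((-1:ℝ)^k * ((2*i).choose k : ℝ)) : ℂ) *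
        Complex.exp (↑((2*(k:ℝ) - 2*i) * θ) * I) := by
    rw [← h2, sub_pow]
    refine Finset.sum_congr rfl fun k hk => ?_
    have hk2 : k ≤ 2*i := Nat.lt_succ_iff.mp (Finset.mem_range.mp hk)
    have hprod : a^k * b^(2*i-k) = Complex.exp (↑((2*(k:ℝ) - 2*i) * θ) * I) := by
      rw [ha, hb, ← Complex.exp_nat_mul, ← Complex.exp_nat_mul, ← Complex.exp_add]
      congr 1
      push_cast [Nat.cast_sub hk2]
      ring
    have hsign : ((-1:ℂ))^(k + 2*i) = ↑((-1:ℝ)^k) := by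
      push_cast
      rw [pow_add, pow_mul]
      norm_num
    calc ((-1:ℂ))^(k + 2*i) * a^k * b^(2*i-k) * ((2*i).choose k : ℂ)
        = ((-1:ℂ))^(k + 2*i) * ((2*i).choose k : ℂ) * (a^k * b^(2*i-k)) := by ring
      _ = (↑((-1:ℝ)^k * ((2*i).choose k : ℝ)) : ℂ) *
            Complex.exp (↑((2*(k:ℝ) - 2*i) * θ) * I) := by
          rw [hprod, hsign]; push_cast; ring
  have hL : ((-4:ℂ)^i * (Complex.sin ↑θ)^(2*i)) =
      ((((-4:ℝ)^i * Real.sin θ^(2*i)) : ℝ) : ℂ) := by push_cast; ring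
  rw [hL] at key
  have h := congrArg Complex.re key
  simpa only [Complex.ofReal_re, Complex.re_sum, Complex.re_ofReal_mul,
    Complex.exp_ofReal_mul_I_re] using h

theorem stmt19 (i n : ℕ) (hi : 1 ≤ i) (hlt : 2 * i < n) :
    ∑ j ∈ Finset.range (n + 1),
      (-1 : ℝ) ^ j * (Real.sin (j * Real.pi / (2 * n))) ^ (2 * i) =
      (1 / 2) * (-1) ^ n := by
  have hne : ((-4:ℝ)^i) ≠ 0 := pow_ne_zero _ (by norm_num)
  have hnne : ((n:ℝ)) ≠ 0 := Nat.cast_ne_zero.mpr (by omega)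
  apply mul_left_cancel₀ hne
  rw [Finset.mul_sum]
  have halt : ∑ k ∈ Finset.range (2*i+1), (-1:ℝ)^k * ((2*i).choose k : ℝ) = 0 := by
    have h := @Int.alternating_sum_range_choose (2*i)
    rw [if_neg (by omega)] at h
    have h2 := congrArg (fun z : ℤ => (z : ℝ)) h
    push_cast at h2
    simpa using h2
  have hbin : ∑ k ∈ Finset.range (2*i+1), ((2*i).choose k : ℝ) = (4:ℝ)^i := by
    have h := Nat.sum_range_choose (2*i)
    have h2 := congrArg (fun z : ℕ => (z : ℝ)) h
    push_cast at h2
    rw [h2, pow_mul]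
    norm_num
  have expand : ∀ k, (-1:ℝ)^k * ((2*i).choose k : ℝ) * ((1 + (-1:ℝ)^(n+k+i))/2)
      = (1/2) * ((-1:ℝ)^k * ((2*i).choose k : ℝ))
        + ((-1:ℝ)^(n+i)/2) * ((2*i).choose k : ℝ) := by
    intro k
    have hkey : (-1:ℝ)^k * (-1:ℝ)^(n+k+i) = (-1:ℝ)^(n+i) := by
      rw [← pow_add, show k + (n + k + i) = 2*k + (n+i) from by ring, pow_add, pow_mul]
      norm_num
    linear_combination (((2*i).choose k : ℝ)/2) * hkey
  calc ∑ j ∈ Finset.range (n+1), (-4:ℝ)^i * ((-1:ℝ)^j * Real.sin (↑j * Real.pi / (2*↑n)) ^ (2*i))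
      = ∑ j ∈ Finset.range (n+1), ∑ k ∈ Finset.range (2*i+1),
          (-1:ℝ)^k * ((2*i).choose k : ℝ) *
            ((-1:ℝ)^j * Real.cos ((2*(k:ℝ) - 2*i) * (↑j * Real.pi / (2*↑n)))) := by
        refine Finset.sum_congr rfl fun j _ => ?_
        rw [show (-4:ℝ)^i * ((-1:ℝ)^j * Real.sin (↑j * Real.pi / (2*↑n)) ^ (2*i))
              = (-1:ℝ)^j * ((-4:ℝ)^i * Real.sin (↑j * Real.pi / (2*↑n)) ^ (2*i)) from by ring,
            sin_pow_expand, Finset.mul_sum]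
        exact Finset.sum_congr rfl fun k _ => by ring
    _ = ∑ k ∈ Finset.range (2*i+1), ∑ j ∈ Finset.range (n+1),
          (-1:ℝ)^k * ((2*i).choose k : ℝ) *
            ((-1:ℝ)^j * Real.cos ((2*(k:ℝ) - 2*i) * (↑j * Real.pi / (2*↑n)))) :=
        Finset.sum_comm
    _ = ∑ k ∈ Finset.range (2*i+1),
          (-1:ℝ)^k * ((2*i).choose k : ℝ) * ((1 + (-1:ℝ)^(n+k+i))/2) := by
        refine Finset.sum_congr rfl fun k hk => ?_
        have hk2 : k ≤ 2*i := Nat.lt_succ_iff.mp (Finset.mem_range.mp hk)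
        set m : ℕ := ((k:ℤ) - (i:ℤ)).natAbs with hm
        have hmn : m < n := by omega
        have hmr : (m:ℝ) = |(k:ℝ) - (i:ℝ)| := by
          rw [hm]
          push_cast [Nat.cast_natAbs]
          norm_num
        have hcos : ∀ j : ℕ, Real.cos ((2*(k:ℝ) - 2*i) * (↑j * Real.pi / (2*↑n)))
            = Real.cos (↑m * ↑j * Real.pi / ↑n) := by
          intro j
          have harg : (2*(k:ℝ) - 2*i) * (↑j * Real.pi / (2*↑n))
              = ((k:ℝ) - i) * ↑j * Real.pi / ↑n := by
            field_simp
          rw [harg, hmr]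
          rcases abs_cases ((k:ℝ) - (i:ℝ)) with ⟨h,_⟩ | ⟨h,_⟩
          · rw [h]
          · rw [h, show -((k:ℝ)-i) * ↑j * Real.pi / ↑n
                = -(((k:ℝ)-i) * ↑j * Real.pi / ↑n) from by ring, Real.cos_neg]
        have hpar : (-1:ℝ)^(n+m) = (-1:ℝ)^(n+k+i) := by
          rw [pow_add, show n+k+i = n+(k+i) from by ring, pow_add]
          congr 1
          have hiff : Even m ↔ Even (k+i) := by
            rw [hm, Int.natAbs_even, Int.even_sub, Nat.even_add]
            simp [Int.even_coe_nat]
          rcases Nat.even_or_odd (k+i) with h | h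
          · rw [h.neg_one_pow, (hiff.mpr h).neg_one_pow]
          · rw [h.neg_one_pow, (Nat.not_even_iff_odd.mp
              (fun he => (Nat.not_even_iff_odd.mpr h) (hiff.mp he))).neg_one_pow]
        rw [← Finset.mul_sum]
        congr 1
        calc ∑ j ∈ Finset.range (n+1),
              (-1:ℝ)^j * Real.cos ((2*(k:ℝ) - 2*i) * (↑j * Real.pi / (2*↑n)))
            = ∑ j ∈ Finset.range (n+1), (-1:ℝ)^j * Real.cos (↑m * ↑j * Real.pi / ↑n) :=
              Finset.sum_congr rfl fun j _ => by rw [hcos j]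
          _ = (1 + (-1:ℝ)^(n+m))/2 := cos_alt_sum m n hmn
          _ = (1 + (-1:ℝ)^(n+k+i))/2 := by rw [hpar]
    _ = (-4:ℝ)^i * ((1/2) * (-1:ℝ)^n) := by
        rw [Finset.sum_congr rfl fun k _ => expand k, Finset.sum_add_distrib,
          ← Finset.mul_sum, ← Finset.mul_sum, halt, hbin]
        rw [show (-4:ℝ)^i = (-1:ℝ)^i * 4^i from by rw [← neg_one_mul, mul_pow], pow_add]
        ring
end
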